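/- arXiv:2506.07538 — 9 statements merged into one kernel-verified Lean document; each statement's English description precedes it below -/
import Mathlib

section
/- If A is an n×n expansive real matrix (all eigenvalues have modulus greater than 1), then there exists an inner product on ℝ^n such that A(B°) ⊃ B, where B is the closed unit ball of the induced norm and B° its interior. -/
open Matrix
open scoped ENNReal NNReal

/-- `A` is expansive: every (complex) eigenvalue of `A` has modulus `> 1`. -/
def Expansive {n : ℕ} (A : Matrix (Fin n) (Fin n) ℝ) : Prop :=
  ∀ μ ∈ spectrum ℂ (A.map (algebraMap ℝ ℂ)), 1 < ‖μ‖

attribute [local instance] Matrix.linftyOpNormedAddCommGroup Matrix.linftyOpNormedRing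
  Matrix.linftyOpNormedAlgebra

private lemma dot_nonneg' {n : ℕ} (v : Fin n → ℝ) : 0 ≤ v ⬝ᵥ v :=
  Finset.sum_nonneg fun i _ => mul_self_nonneg _

private lemma dot_pos' {n : ℕ} {v : Fin n → ℝ} (hv : v ≠ 0) : 0 < v ⬝ᵥ v := by
  obtain ⟨i, hi⟩ := Function.ne_iff.mp hv
  exact Finset.sum_pos' (fun j _ => mul_self_nonneg _)
    ⟨i, Finset.mem_univ i, mul_self_pos.mpr hi⟩

private lemma dot_le' {n : ℕ} (v : Fin n → ℝ) : v ⬝ᵥ v ≤ n * ‖v‖ ^ 2 := by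
  have h : ∀ i, v i * v i ≤ ‖v‖ ^ 2 := by
    intro i
    have h1 : |v i| ≤ ‖v‖ := by
      simpa [Real.norm_eq_abs] using norm_le_pi_norm v i
    nlinarith [abs_nonneg (v i), le_abs_self (v i), neg_abs_le (v i)]
  calc v ⬝ᵥ v ≤ ∑ _i : Fin n, ‖v‖ ^ 2 := Finset.sum_le_sum fun i _ => h i
    _ = n * ‖v‖ ^ 2 := by simp [Finset.sum_const, mul_comm]

private lemma norm_sq_le_dot' {n : ℕ} (v : Fin n → ℝ) : ‖v‖ ^ 2 ≤ v ⬝ᵥ v := by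
  rcases isEmpty_or_nonempty (Fin n) with h | h
  · have : ‖v‖ = 0 := by
      simp [Pi.norm_def, Finset.univ_eq_empty]
    simp [this, dot_nonneg' v]
  · obtain ⟨i, -, hi⟩ := Finset.exists_mem_eq_sup (Finset.univ : Finset (Fin n))
      Finset.univ_nonempty (fun i => ‖v i‖₊)
    have hnorm : ‖v‖ = |v i| := by
      rw [Pi.norm_def, hi]
      simp [Real.norm_eq_abs]
    rw [hnorm]
    have : |v i| ^ 2 = v i * v i := by nlinarith [abs_nonneg (v i), sq_abs (v i)]
    rw [this]
    exact Finset.single_le_sum (fun j _ => mul_self_nonneg (v j)) (Finset.mem_univ i)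

private lemma mulVec_map_norm_le {n : ℕ} (M : Matrix (Fin n) (Fin n) ℝ) (x : Fin n → ℝ) :
    ‖M.mulVec x‖ ≤ ‖M.map (algebraMap ℝ ℂ)‖ * ‖x‖ := by
  set z : Fin n → ℂ := fun i => (x i : ℂ) with hz
  have h1 : (M.map (algebraMap ℝ ℂ)).mulVec z = fun i => ((M.mulVec x i : ℝ) : ℂ) := by
    funext i
    simp only [Matrix.mulVec, dotProduct, Matrix.map_apply, hz]
    push_cast
    rfl
  have h2 : ‖(M.map (algebraMap ℝ ℂ)).mulVec z‖ = ‖M.mulVec x‖ := by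
    rw [h1, Pi.norm_def, Pi.norm_def]
    congr 1
    exact Finset.sup_congr rfl fun i _ => Complex.nnnorm_real _
  have h3 : ‖z‖ = ‖x‖ := by
    rw [Pi.norm_def, Pi.norm_def]
    congr 1
    exact Finset.sup_congr rfl fun i _ => Complex.nnnorm_real _
  calc ‖M.mulVec x‖ = ‖(M.map (algebraMap ℝ ℂ)).mulVec z‖ := h2.symm
    _ ≤ ‖M.map (algebraMap ℝ ℂ)‖ * ‖z‖ := Matrix.linfty_opNorm_mulVec _ _
    _ = ‖M.map (algebraMap ℝ ℂ)‖ * ‖x‖ := by rw [h3]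

private def bil {n : ℕ} (M : Matrix (Fin n) (Fin n) ℝ) :
    (Fin n → ℝ) →ₗ[ℝ] (Fin n → ℝ) →ₗ[ℝ] ℝ :=
  LinearMap.mk₂ ℝ (fun x y => M.mulVec x ⬝ᵥ M.mulVec y)
    (fun x x' y => by simp [Matrix.mulVec_add, add_dotProduct])
    (fun c x y => by simp [Matrix.mulVec_smul, smul_dotProduct])
    (fun x y y' => by simp [Matrix.mulVec_add, dotProduct_add])
    (fun c x y => by simp [Matrix.mulVec_smul, dotProduct_smul])

/-- If `A` is an expansive real matrix, there is an inner product on `ℝ^n`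
(a symmetric positive-definite bilinear form) such that `A(B°) ⊃ B`, where `B`
is the closed unit ball of the induced norm. -/
theorem stmt0 {n : ℕ} (A : Matrix (Fin n) (Fin n) ℝ) (hA : Expansive A) :
    ∃ f : (Fin n → ℝ) →ₗ[ℝ] (Fin n → ℝ) →ₗ[ℝ] ℝ,
      (∀ x y, f x y = f y x) ∧ (∀ x, x ≠ 0 → 0 < f x x) ∧
      {x | f x x ≤ 1} ⊆ A.mulVec '' interior {x | f x x ≤ 1} := by
  rcases Nat.eq_zero_or_pos n with hn | hn
  · subst hn
    refine ⟨0, fun x y => rfl, fun x hx => absurd (Subsingleton.elim x 0) hx,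
      fun x _ => ⟨x, ?_, Subsingleton.elim _ _⟩⟩
    simp
  haveI : Nonempty (Fin n) := Fin.pos_iff_nonempty.mp hn
  set φ := algebraMap ℝ ℂ with hφ
  -- A is invertible
  have hAcUnit : IsUnit (A.map φ) := by
    by_contra h
    have h0 : (0 : ℂ) ∈ spectrum ℂ (A.map φ) := (spectrum.zero_mem_iff ℂ).mpr h
    exact absurd (hA 0 h0) (by norm_num)
  have hdet : IsUnit A.det := by
    have h1 : IsUnit (A.map φ).det := (Matrix.isUnit_iff_isUnit_det _).mp hAcUnit
    rw [← RingHom.mapMatrix_apply, ← RingHom.map_det] at h1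
    rw [isUnit_iff_ne_zero] at h1 ⊢
    intro h; exact h1 (by simp [h])
  set C := A⁻¹ with hCdef
  have hAC : A * C = 1 := Matrix.mul_nonsing_inv A hdet
  have hCA : C * A = 1 := Matrix.nonsing_inv_mul A hdet
  have hACc : A.map φ * C.map φ = 1 := by
    rw [← Matrix.map_mul, hAC]; simp
  have hCAc : C.map φ * A.map φ = 1 := by
    rw [← Matrix.map_mul, hCA]; simp
  set u : (Matrix (Fin n) (Fin n) ℂ)ˣ := ⟨A.map φ, C.map φ, hACc, hCAc⟩ with hu
  -- spectrum of C.map φ is inside the open unit disc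
  have hspec : ∀ ν ∈ spectrum ℂ (C.map φ), ‖ν‖₊ < 1 := by
    intro ν hν
    have hν0 : ν ≠ 0 := by
      rintro rfl
      exact (spectrum.zero_mem_iff ℂ).mp hν ⟨u⁻¹, rfl⟩
    have h1 : ((Units.mk0 ν hν0 : ℂˣ) : ℂ) ∈ spectrum ℂ ((u⁻¹ : (Matrix (Fin n) (Fin n) ℂ)ˣ) :
        Matrix (Fin n) (Fin n) ℂ) := hν
    have h2 := spectrum.inv_mem_iff.mp h1
    rw [inv_inv] at h2
    have h3 : (1 : ℝ) < ‖ν⁻¹‖ := by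
      have := hA _ h2
      simpa using this
    rw [norm_inv] at h3
    have hνpos : (0 : ℝ) < ‖ν‖ := norm_pos_iff.mpr hν0
    have : ‖ν‖ < 1 := by
      rw [lt_inv_comm₀] at h3 <;> simp_all
    exact_mod_cast this
  haveI : CompleteSpace (Matrix (Fin n) (Fin n) ℂ) :=
    FiniteDimensional.complete ℂ (Matrix (Fin n) (Fin n) ℂ)
  have hsr : spectralRadius ℂ (C.map φ) < 1 := by
    have := spectrum.spectralRadius_lt_of_forall_lt (C.map φ) (r := 1) hspec
    simpa using this
  -- Gelfand: find m ≥ 1 with ‖(C.map φ)^m‖ < 1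
  have hg := spectrum.pow_nnnorm_pow_one_div_tendsto_nhds_spectralRadius (C.map φ)
  have hev := hg.eventually_lt_const hsr
  obtain ⟨m, hmlt, hm1⟩ := (hev.and (Filter.eventually_ge_atTop 1)).exists
  have hmnorm : ‖(C.map φ) ^ m‖ < 1 := by
    by_contra hge
    push_neg at hge
    have h1 : (1 : ℝ≥0∞) ≤ (‖(C.map φ) ^ m‖₊ : ℝ≥0∞) := by
      exact_mod_cast (by exact_mod_cast hge : (1 : ℝ≥0) ≤ ‖(C.map φ) ^ m‖₊)
    have h2 : (1 : ℝ≥0∞) ≤ (‖(C.map φ) ^ m‖₊ : ℝ≥0∞) ^ (1 / (m : ℝ)) := by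
      calc (1 : ℝ≥0∞) = 1 ^ (1 / (m : ℝ)) := by rw [ENNReal.one_rpow]
        _ ≤ _ := ENNReal.rpow_le_rpow h1 (by positivity)
    exact absurd hmlt (not_lt.mpr h2)
  -- find k ≥ 1 with ‖(C.map φ)^k‖ < ε := 1/(n+1)
  set ε : ℝ := 1 / (n + 1) with hε
  have hεpos : 0 < ε := by positivity
  obtain ⟨t, ht⟩ := exists_pow_lt_of_lt_one hεpos hmnorm
  set t' := max t 1 with ht'
  set k := m * t' with hk
  have hk1 : 1 ≤ k := Nat.one_le_iff_ne_zero.mpr (by positivity)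
  have hknorm : ‖(C.map φ) ^ k‖ < ε := by
    have h1 : ‖(C.map φ) ^ k‖ ≤ ‖(C.map φ) ^ m‖ ^ t' := by
      rw [hk, pow_mul]
      exact norm_pow_le' _ (lt_of_lt_of_le one_pos (le_max_right t 1))
    have h2 : ‖(C.map φ) ^ m‖ ^ t' ≤ ‖(C.map φ) ^ m‖ ^ t :=
      pow_le_pow_of_le_one (norm_nonneg _) hmnorm.le (le_max_left t 1)
    linarith
  -- the key contraction estimate
  have hmain : ∀ x : Fin n → ℝ, x ≠ 0 →
      (C ^ k).mulVec x ⬝ᵥ (C ^ k).mulVec x < x ⬝ᵥ x := by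
    intro x hx0
    have hxpos : 0 < x ⬝ᵥ x := dot_pos' hx0
    have hmapk : (C ^ k).map φ = (C.map φ) ^ k := by
      have := map_pow (φ.mapMatrix) C k
      simpa [RingHom.mapMatrix_apply] using this
    have h1 : ‖(C ^ k).mulVec x‖ ≤ ‖(C.map φ) ^ k‖ * ‖x‖ := by
      have := mulVec_map_norm_le (C ^ k) x
      rwa [hmapk] at this
    set e := ‖(C.map φ) ^ k‖ with he
    have hepos : 0 ≤ e := norm_nonneg _
    have h2 : ‖(C ^ k).mulVec x‖ ^ 2 ≤ e ^ 2 * ‖x‖ ^ 2 := by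
      nlinarith [norm_nonneg ((C ^ k).mulVec x), norm_nonneg x]
    have h3 : (C ^ k).mulVec x ⬝ᵥ (C ^ k).mulVec x ≤ n * (e ^ 2 * ‖x‖ ^ 2) := by
      calc (C ^ k).mulVec x ⬝ᵥ (C ^ k).mulVec x ≤ n * ‖(C ^ k).mulVec x‖ ^ 2 := dot_le' _
        _ ≤ n * (e ^ 2 * ‖x‖ ^ 2) := by
            apply mul_le_mul_of_nonneg_left h2 (by positivity)
    have h4 : ‖x‖ ^ 2 ≤ x ⬝ᵥ x := norm_sq_le_dot' x
    have h5 : (n : ℝ) * ε ^ 2 < 1 := by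
      rw [hε, div_pow, one_pow, mul_one_div,
        div_lt_one (show (0:ℝ) < ((n:ℝ)+1)^2 by positivity)]
      nlinarith [(Nat.cast_pos (α := ℝ)).mpr hn]
    have h6 : e < ε := hknorm
    have he2 : e ^ 2 ≤ ε ^ 2 := by nlinarith
    calc (C ^ k).mulVec x ⬝ᵥ (C ^ k).mulVec x ≤ n * (e ^ 2 * ‖x‖ ^ 2) := h3
      _ ≤ n * (ε ^ 2 * (x ⬝ᵥ x)) := by
          exact mul_le_mul_of_nonneg_left
            (mul_le_mul he2 h4 (sq_nonneg _) (by positivity)) (Nat.cast_nonneg n)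
      _ = (n * ε ^ 2) * (x ⬝ᵥ x) := by ring
      _ < 1 * (x ⬝ᵥ x) := mul_lt_mul_of_pos_right h5 hxpos
      _ = x ⬝ᵥ x := one_mul _
  -- define the bilinear form
  set f : (Fin n → ℝ) →ₗ[ℝ] (Fin n → ℝ) →ₗ[ℝ] ℝ :=
    ∑ j ∈ Finset.range k, bil (C ^ j) with hfdef
  have hf : ∀ x y, f x y = ∑ j ∈ Finset.range k,
      ((C ^ j).mulVec x ⬝ᵥ (C ^ j).mulVec y) := by
    intro x y
    rw [hfdef]
    simp [bil, LinearMap.sum_apply]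
  refine ⟨f, ?_, ?_, ?_⟩
  · intro x y
    simp only [hf]
    exact Finset.sum_congr rfl fun j _ => dotProduct_comm _ _
  · intro x hx
    rw [hf]
    have h0 : 0 < (C ^ 0).mulVec x ⬝ᵥ (C ^ 0).mulVec x := by
      simpa [Matrix.one_mulVec] using dot_pos' hx
    exact lt_of_lt_of_le h0 (Finset.single_le_sum
      (f := fun j => (C ^ j).mulVec x ⬝ᵥ (C ^ j).mulVec x)
      (fun j _ => dot_nonneg' _) (Finset.mem_range.mpr hk1))
  · intro x hx
    have hAmul : A.mulVec (C.mulVec x) = x := by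
      rw [Matrix.mulVec_mulVec, hAC, Matrix.one_mulVec]
    refine ⟨C.mulVec x, ?_, hAmul⟩
    -- continuity of the quadratic form
    have hQc : Continuous fun z : Fin n → ℝ => f z z := by
      simp only [hf]
      apply continuous_finset_sum
      intro j _
      have hc : Continuous fun z : Fin n → ℝ => (C ^ j).mulVec z := by
        have := LinearMap.continuous_of_finiteDimensional ((C ^ j).mulVecLin)
        simpa [Matrix.coe_mulVecLin] using this
      simp only [dotProduct]
      exact continuous_finset_sum _ fun i _ =>
        ((continuous_apply i).comp hc).mul ((continuous_apply i).comp hc)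
    have hsub : {z : Fin n → ℝ | f z z < 1} ⊆ interior {z | f z z ≤ 1} :=
      interior_maximal (fun z hz => le_of_lt (show f z z < 1 from hz)) (isOpen_lt hQc continuous_const)
    apply hsub
    show f (C.mulVec x) (C.mulVec x) < 1
    rcases eq_or_ne x 0 with rfl | hx0
    · simp [hf, Matrix.mulVec_zero, dotProduct_zero]
    · -- Q(Cx) = Q(x) - ⟨x,x⟩ + ⟨C^k x, C^k x⟩
      have hshift : ∀ j : ℕ, (C ^ j).mulVec (C.mulVec x) = (C ^ (j + 1)).mulVec x := by
        intro j
        rw [Matrix.mulVec_mulVec, ← pow_succ]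
      have hQ : f (C.mulVec x) (C.mulVec x) =
          f x x - x ⬝ᵥ x + ((C ^ k).mulVec x ⬝ᵥ (C ^ k).mulVec x) := by
        rw [hf, hf]
        simp only [hshift]
        have h1 : ∑ j ∈ Finset.range (k + 1),
            ((C ^ j).mulVec x ⬝ᵥ (C ^ j).mulVec x) =
            (∑ j ∈ Finset.range k, ((C ^ (j + 1)).mulVec x ⬝ᵥ (C ^ (j + 1)).mulVec x)) +
            ((C ^ 0).mulVec x ⬝ᵥ (C ^ 0).mulVec x) := Finset.sum_range_succ' _ k
        have h2 : ∑ j ∈ Finset.range (k + 1),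
            ((C ^ j).mulVec x ⬝ᵥ (C ^ j).mulVec x) =
            (∑ j ∈ Finset.range k, ((C ^ j).mulVec x ⬝ᵥ (C ^ j).mulVec x)) +
            ((C ^ k).mulVec x ⬝ᵥ (C ^ k).mulVec x) := Finset.sum_range_succ _ k
        have h0 : (C ^ 0).mulVec x ⬝ᵥ (C ^ 0).mulVec x = x ⬝ᵥ x := by
          simp [Matrix.one_mulVec]
        linarith
      have hxle : f x x ≤ 1 := hx
      have hlt := hmain x hx0
      rw [hQ]
      linarith
end

section
/- If A is strictly expansive relative to a compact set K (i.e., K tiles ℝ^n by integer translations and A(K°) ⊃ K), then K contains an open neighborhood of the origin. -/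
open Matrix MeasureTheory

def zvec {n : ℕ} (k : Fin n → ℤ) : Fin n → ℝ := fun i => (k i : ℝ)

def TilesAE {n : ℕ} (K : Set (Fin n → ℝ)) : Prop :=
  ∀ᵐ x : Fin n → ℝ ∂volume, ∃! k : Fin n → ℤ, x + zvec k ∈ K

open Filter

lemma tendsto_pow_of_specRad_lt_one {A : Type*} [NormedRing A] [NormedAlgebra ℂ A]
    [CompleteSpace A] (a : A) (h : spectralRadius ℂ a < 1) :
    Tendsto (fun k => a ^ k) atTop (nhds 0) := by
  obtain ⟨c, hc, hc1⟩ := ENNReal.lt_iff_exists_nnreal_btwn.mp h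
  have hg := spectrum.pow_nnnorm_pow_one_div_tendsto_nhds_spectralRadius a
  have hev : ∀ᶠ k : ℕ in atTop, (‖a ^ k‖₊ : ENNReal) ^ (1 / (k:ℝ)) < (c : ENNReal) :=
    hg.eventually_lt_const hc
  have hev2 : ∀ᶠ k : ℕ in atTop, ‖a ^ k‖ ≤ (c:ℝ) ^ k := by
    filter_upwards [hev, Filter.eventually_ge_atTop 1] with k hk hk1
    have hk0 : (1 / (k:ℝ)) * (k:ℝ) = 1 := by
      have : (k:ℝ) ≠ 0 := by positivity
      field_simp
    have hx : (‖a ^ k‖₊ : ENNReal) ≤ (c : ENNReal) ^ ((k:ℕ):ℝ) := by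
      have h2 := ENNReal.rpow_le_rpow hk.le (by positivity : (0:ℝ) ≤ (k:ℝ))
      rwa [← ENNReal.rpow_mul, hk0, ENNReal.rpow_one] at h2
    rw [ENNReal.rpow_natCast] at hx
    have hx' : ‖a ^ k‖₊ ≤ c ^ k := by exact_mod_cast hx
    calc ‖a ^ k‖ = ((‖a ^ k‖₊ : NNReal) : ℝ) := rfl
    _ ≤ ((c ^ k : NNReal) : ℝ) := by exact_mod_cast hx'
    _ = (c:ℝ) ^ k := by rw [NNReal.coe_pow]
  have hc1' : (c:ℝ) < 1 := by exact_mod_cast hc1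
  exact squeeze_zero_norm' hev2 (tendsto_pow_atTop_nhds_zero_of_lt_one c.coe_nonneg hc1')


-- key convergence lemma
lemma mulVec_pow_tendsto {n : ℕ} (hn : 0 < n) (Mr : Matrix (Fin n) (Fin n) ℝ)
    (hA : ∀ μ ∈ spectrum ℂ (Mr.map (algebraMap ℝ ℂ)), 1 < ‖μ‖)
    (hdet : IsUnit Mr.det) (x : Fin n → ℝ) :
    Tendsto (fun k => (Mr⁻¹ ^ k).mulVec x) atTop (nhds 0) := by
  set f : ℝ →+* ℂ := algebraMap ℝ ℂ
  set B : Matrix (Fin n) (Fin n) ℝ := Mr⁻¹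
  have hMB : Mr * B = 1 := mul_nonsing_inv Mr hdet
  have hBM : B * Mr = 1 := nonsing_inv_mul Mr hdet
  set Mc := Mr.map f
  set Bc := B.map f
  have hMBc : Mc * Bc = 1 := by
    have := congrArg (f.mapMatrix) hMB
    simpa [RingHom.mapMatrix_apply] using this
  have hBMc : Bc * Mc = 1 := by
    have := congrArg (f.mapMatrix) hBM
    simpa [RingHom.mapMatrix_apply] using this
  set u : (Matrix (Fin n) (Fin n) ℂ)ˣ := ⟨Mc, Bc, hMBc, hBMc⟩
  -- spectrum of Bc is inside the open unit ball
  have hspec : ∀ μ ∈ spectrum ℂ Bc, ‖μ‖ < 1 := by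
    intro μ hμ
    have hunit : IsUnit Bc := ⟨u⁻¹, rfl⟩
    have hμ0 : μ ≠ 0 := by
      rintro rfl
      exact (spectrum.zero_mem_iff ℂ).mp hμ hunit
    have : ((Units.mk0 μ hμ0 : ℂˣ) : ℂ) ∈ spectrum ℂ ((u⁻¹ : _ˣ) : Matrix (Fin n) (Fin n) ℂ) := hμ
    have h2 := spectrum.inv_mem_iff.mp this
    rw [inv_inv u] at h2
    have h3 : 1 < ‖μ⁻¹‖ := hA _ h2
    rw [norm_inv] at h3
    have hpos : 0 < ‖μ‖ := norm_pos_iff.mpr hμ0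
    calc ‖μ‖ = ‖μ‖ * 1 := (mul_one _).symm
    _ < ‖μ‖ * ‖μ‖⁻¹ := by exact (mul_lt_mul_iff_right₀ hpos).mpr h3
    _ = 1 := mul_inv_cancel₀ (ne_of_gt hpos)
  -- move to continuous linear maps on Euclidean space
  set T : EuclideanSpace ℂ (Fin n) →L[ℂ] EuclideanSpace ℂ (Fin n) :=
    Matrix.toEuclideanCLM (𝕜 := ℂ) Bc
  have hspecT : ∀ μ ∈ spectrum ℂ T, ‖μ‖ < 1 := by
    intro μ hμ
    apply hspec
    rwa [AlgEquiv.spectrum_eq (Matrix.toEuclideanCLM (𝕜 := ℂ) (n := Fin n))] at hμ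
  haveI : Nonempty (Fin n) := ⟨⟨0, hn⟩⟩
  have hrad : spectralRadius ℂ T < 1 := by
    have := spectrum.spectralRadius_lt_of_forall_lt T
      (r := 1) (fun z hz => by have h := hspecT z hz; rw [← coe_nnnorm] at h; exact_mod_cast h)
    simpa using this
  have htend := tendsto_pow_of_specRad_lt_one T hrad
  -- pointwise convergence on the complexified vector
  set xc : Fin n → ℂ := fun i => f (x i)
  set v : EuclideanSpace ℂ (Fin n) := (WithLp.equiv 2 _).symm xc
  have hTv : Tendsto (fun k => (T ^ k) v) atTop (nhds 0) := by
    have : Tendsto (fun k => ‖(T ^ k) v‖) atTop (nhds 0) := by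
      apply squeeze_zero (fun k => norm_nonneg _) (fun k => (T ^ k).le_opNorm v)
      simpa using (tendsto_zero_iff_norm_tendsto_zero.mp htend).mul_const ‖v‖
    exact tendsto_zero_iff_norm_tendsto_zero.mpr this
  -- identify (T ^ k) v with the complexified mulVec
  have hid : ∀ k : ℕ, (T ^ k) v = (WithLp.equiv 2 _).symm ((Bc ^ k).mulVec xc) := by
    intro k
    have h1 : T ^ k = Matrix.toEuclideanCLM (𝕜 := ℂ) (Bc ^ k) := (map_pow _ _ _).symm
    rw [h1]; exact Matrix.toEuclideanCLM_toLp _ _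
  -- pass to the Pi topology
  have hPi : Tendsto (fun k => (Bc ^ k).mulVec xc) atTop (nhds 0) := by
    have hcont : Continuous (WithLp.equiv 2 (Fin n → ℂ)) :=
      (PiLp.continuousLinearEquiv 2 ℂ (fun _ : Fin n => ℂ)).continuous
    have h := (hcont.tendsto 0).comp hTv
    simp only [Function.comp_def, hid, Equiv.apply_symm_apply] at h
    simpa using h
  -- take real parts
  have hre : ∀ k : ℕ, ∀ i, ((B ^ k).mulVec x) i = ((Bc ^ k).mulVec xc i).re := by
    intro k i
    have h1 : Bc ^ k = (B ^ k).map f := by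
      have := map_pow (f.mapMatrix) B k
      simpa [RingHom.mapMatrix_apply] using this.symm
    rw [h1]
    have h2 := RingHom.map_mulVec f (B ^ k) x i
    have h3 : (f ∘ x) = xc := rfl
    rw [h3] at h2
    rw [← h2]
    simp [f]
  have heq : ∀ k : ℕ, (fun i => ((Bc ^ k).mulVec xc i).re) = (B ^ k).mulVec x :=
    fun k => funext fun i => (hre k i).symm
  have hcontre : Continuous (fun w : Fin n → ℂ => fun i => (w i).re) :=
    continuous_pi fun i => Complex.continuous_re.comp (continuous_apply i)
  have hfin := (hcontre.tendsto 0).comp hPi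
  simp only [Function.comp_def] at hfin
  exact hfin.congr heq



/-- If the expansive integer matrix `A` is strictly expansive relative to the compact
set `K` (i.e. `K` tiles by integer translations and `A(K°) ⊃ K`), then `K` contains
an open neighborhood of the origin. -/
theorem stmt3 {n : ℕ} (A : Matrix (Fin n) (Fin n) ℤ)
    (hA : Expansive (A.map (Int.cast : ℤ → ℝ)))
    (K : Set (Fin n → ℝ)) (hK : IsCompact K) (htile : TilesAE K)
    (hsub : K ⊆ (A.map (Int.cast : ℤ → ℝ)).mulVec '' interior K) :
    K ∈ nhds (0 : Fin n → ℝ) := by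
  set Mr := A.map (Int.cast : ℤ → ℝ) with hMr
  rw [Expansive] at hA
  have hMcU : IsUnit (Mr.map (algebraMap ℝ ℂ)) := by
    by_contra h
    have := hA 0 ((spectrum.zero_mem_iff ℂ).mpr h)
    norm_num at this
  have hdet : IsUnit Mr.det := by
    have h1 : IsUnit (Mr.map (algebraMap ℝ ℂ)).det := (isUnit_iff_isUnit_det _).mp hMcU
    have h2 : (Mr.map (algebraMap ℝ ℂ)).det = algebraMap ℝ ℂ Mr.det :=
      ((algebraMap ℝ ℂ).map_det Mr).symm
    rw [h2] at h1
    have h3 : Mr.det ≠ 0 := by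
      intro h0; rw [h0] at h1; simp at h1
    exact isUnit_iff_ne_zero.mpr h3
  set B := Mr⁻¹ with hB
  have hBM : B * Mr = 1 := nonsing_inv_mul Mr hdet
  have hstep : ∀ x ∈ K, B.mulVec x ∈ interior K := by
    intro x hx
    obtain ⟨y, hy, rfl⟩ := hsub hx
    have h4 : B.mulVec (Mr.mulVec y) = y := by
      rw [mulVec_mulVec, hBM, one_mulVec]
    rwa [h4]
  haveI : NeBot (ae (volume : Measure (Fin n → ℝ))) := inferInstance
  obtain ⟨x, k0, hk0, -⟩ := htile.exists
  set x0 := x + zvec k0 with hx0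
  have hiter : ∀ j : ℕ, (B ^ j).mulVec x0 ∈ K := by
    intro j; induction j with
    | zero => simpa [one_mulVec] using hk0
    | succ j ih =>
      have h1 : B.mulVec ((B ^ j).mulVec x0) ∈ interior K := hstep _ ih
      rw [mulVec_mulVec, ← pow_succ'] at h1
      exact interior_subset h1
  rcases Nat.eq_zero_or_pos n with hn | hn
  · subst hn
    have hKuniv : K = Set.univ := Set.eq_univ_of_forall fun z => (Subsingleton.elim x0 z) ▸ hk0
    rw [hKuniv]
    exact Filter.univ_mem
  · have hlim := mulVec_pow_tendsto hn Mr hA hdet x0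
    have h0K : (0 : Fin n → ℝ) ∈ K :=
      hK.isClosed.mem_of_tendsto hlim (Filter.Eventually.of_forall hiter)
    obtain ⟨y, hy, hy0⟩ := hsub h0K
    have hy' : y = 0 := by
      have h5 := congrArg B.mulVec hy0
      rwa [mulVec_mulVec, hBM, one_mulVec, mulVec_zero] at h5
    rw [← mem_interior_iff_mem_nhds]
    exact hy' ▸ hy
end

section
/- Let A be a real n×n matrix that is strictly row diagonally dominant, and let α = min_j (|a_{jj}| − Σ_{k≠j} |a_{jk}|) > 0. Then A is invertible and ‖A⁻¹‖_∞ ≤ 1/α, where ‖·‖_∞ is the operator norm induced by the sup-norm on ℝ^n. -/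
open Matrix Finset

lemma varah_key {n : ℕ} (A : Matrix (Fin n) (Fin n) ℝ) (α : ℝ) (hα : 0 < α)
    (hdom : ∀ j, (∑ k ∈ univ.erase j, |A j k|) + α ≤ |A j j|) (y : Fin n → ℝ) :
    α * ‖y‖ ≤ ‖A.mulVec y‖ := by
  rcases Nat.eq_zero_or_pos n with hn | hn
  · subst hn
    have h0 : ‖y‖ = 0 := by simp [Subsingleton.elim y 0]
    rw [h0, mul_zero]
    exact norm_nonneg _
  have : Nonempty (Fin n) := ⟨⟨0, hn⟩⟩
  obtain ⟨j, hj⟩ := Finite.exists_max (fun i => |y i|)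
  have hy : ‖y‖ = |y j| := by
    apply le_antisymm
    · exact pi_norm_le_iff_of_nonneg (abs_nonneg _) |>.2 fun i => by
        simpa [Real.norm_eq_abs] using hj i
    · simpa [Real.norm_eq_abs] using norm_le_pi_norm y j
  have hAj : α * |y j| ≤ |(A.mulVec y) j| := by
    have h1 : |A j j * y j| - |∑ k ∈ univ.erase j, A j k * y k| ≤ |(A.mulVec y) j| := by
      have : (A.mulVec y) j = A j j * y j + ∑ k ∈ univ.erase j, A j k * y k := by
        rw [Matrix.mulVec, dotProduct, ← Finset.add_sum_erase _ _ (Finset.mem_univ j)]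
      rw [this]
      have := abs_sub_abs_le_abs_sub (A j j * y j) (-(∑ k ∈ univ.erase j, A j k * y k))
      rwa [abs_neg, sub_neg_eq_add] at this
    have h2 : |∑ k ∈ univ.erase j, A j k * y k| ≤ (∑ k ∈ univ.erase j, |A j k|) * |y j| := by
      refine (Finset.abs_sum_le_sum_abs _ _).trans ?_
      rw [Finset.sum_mul]
      refine Finset.sum_le_sum fun k _ => ?_
      rw [abs_mul]
      exact mul_le_mul_of_nonneg_left (hj k) (abs_nonneg _)
    have h3 : α * |y j| ≤ |A j j * y j| - (∑ k ∈ univ.erase j, |A j k|) * |y j| := by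
      rw [abs_mul, ← sub_mul]
      have := hdom j
      nlinarith [abs_nonneg (y j)]
    linarith
  calc α * ‖y‖ = α * |y j| := by rw [hy]
    _ ≤ |(A.mulVec y) j| := hAj
    _ ≤ ‖A.mulVec y‖ := by simpa [Real.norm_eq_abs] using norm_le_pi_norm (A.mulVec y) j

/-- Varah's theorem: if `A` is strictly row diagonally dominant with gap `α > 0`
(`|a_jj| − Σ_{k≠j} |a_jk| ≥ α` for every row `j`), then `A` is invertible and
`‖A⁻¹‖_∞ ≤ 1/α`, where the operator norm is induced by the sup-norm on `ℝ^n`. -/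
theorem stmt5 {n : ℕ} (A : Matrix (Fin n) (Fin n) ℝ) (α : ℝ) (hα : 0 < α)
    (hdom : ∀ j, (∑ k ∈ univ.erase j, |A j k|) + α ≤ |A j j|) :
    IsUnit A.det ∧ ∀ x : Fin n → ℝ, ‖A⁻¹.mulVec x‖ ≤ (1 / α) * ‖x‖ := by
  have hdet : A.det ≠ 0 := by
    apply det_ne_zero_of_sum_row_lt_diag
    intro k
    have := hdom k
    simp only [Real.norm_eq_abs]
    linarith
  have hu : IsUnit A.det := isUnit_iff_ne_zero.mpr hdet
  refine ⟨hu, fun x => ?_⟩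
  have hx : A.mulVec (A⁻¹.mulVec x) = x := by
    rw [Matrix.mulVec_mulVec, Matrix.mul_nonsing_inv A (isUnit_iff_ne_zero.mpr hdet), Matrix.one_mulVec]
  have := varah_key A α hα hdom (A⁻¹.mulVec x)
  rw [hx] at this
  rw [div_mul_eq_mul_div, le_div_iff₀ hα, one_mul, mul_comm]
  exact this
end

section
/- If A is an integer matrix and there exists a permutation matrix P such that AP is strictly row diagonally dominant with |（AP)_{jj}| − Σ_{k≠j} |(AP)_{jk}| ≥ 2 for all j, then A((K)°) ⊃ K where K = [−1/2, 1/2]^n. -/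
open Matrix Finset

/-- If the columns of the integer matrix `A` can be rearranged (by a permutation matrix
`P`) so that `AP` is row diagonally dominant with constant `α = 2`, then
`A(K°) ⊃ K` where `K = [−1/2, 1/2]^n` is the unit cube. -/
theorem stmt6 {n : ℕ} (A : Matrix (Fin n) (Fin n) ℤ) (σ : Equiv.Perm (Fin n))
    (hdom : ∀ j, (∑ k ∈ univ.erase j, |(A * σ.permMatrix ℤ) j k|) + 2
        ≤ |(A * σ.permMatrix ℤ) j j|) :
    {x : Fin n → ℝ | ∀ i, |x i| ≤ 1 / 2} ⊆
      (A.map (Int.cast : ℤ → ℝ)).mulVec '' interior {x : Fin n → ℝ | ∀ i, |x i| ≤ 1 / 2} := by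
  intro x hx
  set B : Matrix (Fin n) (Fin n) ℝ := (A * σ.permMatrix ℤ).map (Int.cast : ℤ → ℝ) with hB
  -- real version of the dominance hypothesis
  have hdomR : ∀ j, (∑ k ∈ univ.erase j, |B j k|) + 2 ≤ |B j j| := by
    intro j
    have := hdom j
    have h1 : (∑ k ∈ univ.erase j, |B j k|) = ((∑ k ∈ univ.erase j, |(A * σ.permMatrix ℤ) j k| : ℤ) : ℝ) := by
      push_cast
      refine Finset.sum_congr rfl fun k _ => ?_
      simp [hB, Matrix.map_apply]
    have h2 : |B j j| = ((|(A * σ.permMatrix ℤ) j j| : ℤ) : ℝ) := by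
      simp [hB, Matrix.map_apply]
    rw [h1, h2]
    exact_mod_cast by exact_mod_cast (by exact_mod_cast this : ((∑ k ∈ univ.erase j, |(A * σ.permMatrix ℤ) j k| : ℤ) : ℝ) + 2 ≤ ((|(A * σ.permMatrix ℤ) j j| : ℤ) : ℝ))
  -- B has nonzero determinant
  have hdet : B.det ≠ 0 := by
    apply det_ne_zero_of_sum_row_lt_diag
    intro k
    have := hdomR k
    simp only [Real.norm_eq_abs]
    linarith
  have hunit : IsUnit B.det := isUnit_iff_ne_zero.mpr hdet
  set z : Fin n → ℝ := B⁻¹.mulVec x with hz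
  have hBz : B.mulVec z = x := by
    rw [hz, Matrix.mulVec_mulVec, Matrix.mul_nonsing_inv _ hunit, Matrix.one_mulVec]
  -- bound on z
  have hzb : ∀ k, |z k| ≤ 1 / 4 := by
    intro k
    have hne : (univ : Finset (Fin n)).Nonempty := ⟨k, mem_univ k⟩
    obtain ⟨j, -, hj⟩ := Finset.exists_max_image univ (fun i => |z i|) hne
    have hjk : |z k| ≤ |z j| := hj k (mem_univ k)
    have hzj : |z j| ≤ 1 / 4 := by
      have hxj : |x j| ≤ 1 / 2 := hx j
      have hsum : x j = B j j * z j + ∑ i ∈ univ.erase j, B j i * z i := by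
        rw [← hBz]
        simp only [Matrix.mulVec, dotProduct]
        rw [← Finset.add_sum_erase _ _ (mem_univ j)]
      have htr : |B j j * z j| - |∑ i ∈ univ.erase j, B j i * z i| ≤ |x j| := by
        rw [hsum]
        have := abs_add_le (B j j * z j + ∑ i ∈ univ.erase j, B j i * z i)
          (-(∑ i ∈ univ.erase j, B j i * z i))
        simp only [add_neg_cancel_right, abs_neg] at this
        linarith
      have hsb : |∑ i ∈ univ.erase j, B j i * z i| ≤ (∑ i ∈ univ.erase j, |B j i|) * |z j| := by
        calc |∑ i ∈ univ.erase j, B j i * z i| ≤ ∑ i ∈ univ.erase j, |B j i * z i| :=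
              Finset.abs_sum_le_sum_abs _ _
          _ ≤ ∑ i ∈ univ.erase j, |B j i| * |z j| := by
              refine Finset.sum_le_sum fun i _ => ?_
              rw [abs_mul]
              exact mul_le_mul_of_nonneg_left (hj i (mem_univ i)) (abs_nonneg _)
          _ = (∑ i ∈ univ.erase j, |B j i|) * |z j| := by rw [Finset.sum_mul]
      have hd : 2 * |z j| ≤ |B j j * z j| - (∑ i ∈ univ.erase j, |B j i|) * |z j| := by
        rw [abs_mul]
        have := hdomR j
        nlinarith [abs_nonneg (z j)]
      linarith
    linarith [hjk]
  -- define y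
  set y : Fin n → ℝ := fun i => z (σ i) with hy
  have hAy : (A.map (Int.cast : ℤ → ℝ)).mulVec y = x := by
    have hBfac : B = (A.map (Int.cast : ℤ → ℝ)) * (σ.permMatrix ℝ) := by
      ext i j
      simp only [hB, Matrix.map_apply, Matrix.mul_apply, Equiv.Perm.permMatrix,
        PEquiv.toMatrix, Equiv.toPEquiv_apply, Option.mem_def, Option.some.injEq]
      push_cast
      refine Finset.sum_congr rfl fun k _ => ?_
      simp only [Matrix.of_apply]
      split <;> simp
    have hperm : (σ.permMatrix ℝ).mulVec z = y := by
      funext i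
      simp only [Matrix.mulVec, dotProduct, Equiv.Perm.permMatrix, PEquiv.toMatrix,
        Equiv.toPEquiv_apply, Option.mem_def, Option.some.injEq]
      rw [hy]
      rw [Finset.sum_eq_single (σ i)]
      · simp
      · intro b _ hb; simp [Ne.symm hb]
      · simp
    rw [← hBz, hBfac, ← Matrix.mulVec_mulVec, hperm]
  refine ⟨y, ?_, hAy⟩
  -- y is in the interior
  have hopen : IsOpen {x : Fin n → ℝ | ∀ i, |x i| < 1 / 2} := by
    have : {x : Fin n → ℝ | ∀ i, |x i| < 1 / 2} = ⋂ i, {x : Fin n → ℝ | |x i| < 1 / 2} := by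
      ext; simp
    rw [this]
    refine isOpen_iInter_of_finite fun i => ?_
    have : Continuous fun x : Fin n → ℝ => |x i| := (continuous_apply i).abs
    exact isOpen_lt this continuous_const
  have hsub : {x : Fin n → ℝ | ∀ i, |x i| < 1 / 2} ⊆ {x : Fin n → ℝ | ∀ i, |x i| ≤ 1 / 2} :=
    fun x hx i => le_of_lt (hx i)
  apply interior_maximal hsub hopen
  intro i
  have := hzb (σ i)
  simp only [hy, Set.mem_setOf_eq]
  linarith
end

section
/- Let A be an expansive integer matrix that is row diagonally dominant (|a_{jj}| ≥ Σ_{k≠j}|a_{jk}| + 1 for each j), and suppose the directed graph on vertices {1,…,n} with an edge i→j whenever a_{ij} ≠ 0 is strongly connected. Then there are at most two vectors x with ‖x‖_∞ = 1 and ‖Ax‖_∞ = 1, and they are negatives of each other. -/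
open Matrix Finset

-- core strict diagonal dominance lemma
lemma key_dd {n : ℕ} (A : Matrix (Fin n) (Fin n) ℤ)
    (hdom : ∀ j, (∑ k ∈ univ.erase j, |A j k|) + 1 ≤ |A j j|)
    (v : Fin n → ℝ) (c : ℝ) (hc : 0 < c) (j k₀ : Fin n) (hjk : A j k₀ ≠ 0)
    (hv : ∀ k, |v k| ≤ c) (hj : |v j| = c)
    (hAv : |∑ k, (A j k : ℝ) * v k| ≤ c) : |v k₀| = c := by
  by_cases hk₀j : k₀ = j
  · subst hk₀j; exact hj
  refine le_antisymm (hv k₀) ?_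
  by_contra hlt
  push_neg at hlt
  have hk₀mem : k₀ ∈ univ.erase j := Finset.mem_erase.mpr ⟨hk₀j, mem_univ _⟩
  have hsplit : (A j j : ℝ) * v j + ∑ k ∈ univ.erase j, (A j k : ℝ) * v k
      = ∑ k, (A j k : ℝ) * v k := Finset.add_sum_erase univ (fun k => (A j k : ℝ) * v k) (mem_univ j)
  set S2 := ∑ k ∈ univ.erase j, (A j k : ℝ) * v k with hS2
  have habs : |(A j j : ℝ) * v j| ≤ |∑ k, (A j k : ℝ) * v k| + |S2| := by
    have : (A j j : ℝ) * v j = (∑ k, (A j k : ℝ) * v k) - S2 := by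
      rw [← hsplit]; ring
    rw [this]
    exact abs_sub _ _
  have hS2le : |S2| ≤ ∑ k ∈ univ.erase j, |(A j k : ℝ)| * |v k| := by
    calc |S2| ≤ ∑ k ∈ univ.erase j, |(A j k : ℝ) * v k| :=
          Finset.abs_sum_le_sum_abs _ _
      _ = ∑ k ∈ univ.erase j, |(A j k : ℝ)| * |v k| := by
          refine Finset.sum_congr rfl fun k _ => abs_mul _ _
  have hpos : (0 : ℝ) < |(A j k₀ : ℝ)| := by
    rw [abs_pos]
    exact_mod_cast hjk
  have hstrict : ∑ k ∈ univ.erase j, |(A j k : ℝ)| * |v k|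
      < ∑ k ∈ univ.erase j, |(A j k : ℝ)| * c := by
    refine Finset.sum_lt_sum (fun k _ => mul_le_mul_of_nonneg_left (hv k) (abs_nonneg _))
      ⟨k₀, hk₀mem, mul_lt_mul_of_pos_left hlt hpos⟩
  have hdomR : (∑ k ∈ univ.erase j, |(A j k : ℝ)|) + 1 ≤ |(A j j : ℝ)| := by
    have := hdom j
    push_cast [← Int.cast_abs]
    exact_mod_cast this
  have hsum : ∑ k ∈ univ.erase j, |(A j k : ℝ)| * c
      = (∑ k ∈ univ.erase j, |(A j k : ℝ)|) * c := by
    rw [Finset.sum_mul]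
  have hdiag : |(A j j : ℝ) * v j| = |(A j j : ℝ)| * c := by
    rw [abs_mul, hj]
  set Sig := ∑ k ∈ univ.erase j, |(A j k : ℝ)| with hSig
  have hmul : (Sig + 1) * c ≤ |(A j j : ℝ)| * c :=
    mul_le_mul_of_nonneg_right hdomR hc.le
  nlinarith [hAv, habs, hS2le, hstrict, hsum, hdiag, hmul]

-- entry of mulVec
lemma mv_apply {n : ℕ} (A : Matrix (Fin n) (Fin n) ℤ) (v : Fin n → ℝ) (j : Fin n) :
    (A.map (Int.cast : ℤ → ℝ)).mulVec v j = ∑ k, (A j k : ℝ) * v k := by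
  simp [Matrix.mulVec, dotProduct, Matrix.map_apply]

lemma all_abs_one {n : ℕ} (A : Matrix (Fin n) (Fin n) ℤ)
    (hdom : ∀ j, (∑ k ∈ univ.erase j, |A j k|) + 1 ≤ |A j j|)
    (hconn : ∀ i j : Fin n, Relation.ReflTransGen (fun a b => A a b ≠ 0) i j)
    (x : Fin n → ℝ) (hx : ‖x‖ = 1)
    (hAx : ‖(A.map (Int.cast : ℤ → ℝ)).mulVec x‖ = 1) :
    ∀ k, |x k| = 1 := by
  have hle : ∀ k, |x k| ≤ 1 := fun k => by
    have := norm_le_pi_norm x k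
    rwa [hx, Real.norm_eq_abs] at this
  have hAle : ∀ k, |((A.map (Int.cast : ℤ → ℝ)).mulVec x) k| ≤ 1 := fun k => by
    have := norm_le_pi_norm ((A.map (Int.cast : ℤ → ℝ)).mulVec x) k
    rwa [hAx, Real.norm_eq_abs] at this
  rcases Nat.eq_zero_or_pos n with hn | hn
  · subst hn
    exact fun k => k.elim0
  have : Nonempty (Fin n) := ⟨⟨0, hn⟩⟩
  obtain ⟨i₀, -, hi₀⟩ := Finset.exists_max_image univ (fun i => |x i|) ⟨Classical.arbitrary _, mem_univ _⟩
  have hi₀1 : |x i₀| = 1 := by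
    refine le_antisymm (hle i₀) ?_
    have : ‖x‖ ≤ |x i₀| := by
      refine (pi_norm_le_iff_of_nonneg (abs_nonneg _)).mpr fun i => ?_
      rw [Real.norm_eq_abs]; exact hi₀ i (mem_univ i)
    linarith [hx ▸ this]
  intro k
  induction hconn i₀ k with
  | refl => exact hi₀1
  | tail _ hbc ih =>
    exact key_dd A hdom x 1 one_pos _ _ hbc hle ih (by rw [← mv_apply]; exact hAle _)

lemma agree_prop {n : ℕ} (A : Matrix (Fin n) (Fin n) ℤ)
    (hdom : ∀ j, (∑ k ∈ univ.erase j, |A j k|) + 1 ≤ |A j j|)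
    (x y : Fin n → ℝ) (hx1 : ∀ k, |x k| = 1) (hy1 : ∀ k, |y k| = 1)
    (hAx : ‖(A.map (Int.cast : ℤ → ℝ)).mulVec x‖ = 1)
    (hAy : ‖(A.map (Int.cast : ℤ → ℝ)).mulVec y‖ = 1)
    {j k : Fin n} (hjk : A j k ≠ 0) (hxy : y j = x j) : y k = x k := by
  have hAle : ∀ (v : Fin n → ℝ), ‖(A.map (Int.cast : ℤ → ℝ)).mulVec v‖ = 1 →
      ∀ i, |∑ l, (A i l : ℝ) * v l| ≤ 1 := fun v hv i => by
    have := norm_le_pi_norm ((A.map (Int.cast : ℤ → ℝ)).mulVec v) i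
    rw [hv, Real.norm_eq_abs, mv_apply] at this
    exact this
  have h2 : |x k + y k| = 2 := by
    refine key_dd A hdom (fun i => x i + y i) 2 two_pos j k hjk
      (fun i => (abs_add_le _ _).trans (by rw [hx1 i, hy1 i]; norm_num)) ?_ ?_
    · show |x j + y j| = 2
      rw [hxy]
      have : x j + x j = 2 * x j := by ring
      rw [this, abs_mul, hx1 j]
      norm_num
    · have heq : ∑ l, (A j l : ℝ) * (x l + y l)
          = (∑ l, (A j l : ℝ) * x l) + ∑ l, (A j l : ℝ) * y l := by
        rw [← Finset.sum_add_distrib]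
        exact Finset.sum_congr rfl fun l _ => by ring
      rw [heq]
      calc |(∑ l, (A j l : ℝ) * x l) + ∑ l, (A j l : ℝ) * y l|
          ≤ |∑ l, (A j l : ℝ) * x l| + |∑ l, (A j l : ℝ) * y l| := abs_add_le _ _
        _ ≤ 2 := by linarith [hAle x hAx j, hAle y hAy j]
  rcases abs_eq_abs.mp (by rw [hx1 k, hy1 k] : |y k| = |x k|) with h' | h'
  · exact h'
  · exfalso
    rw [h'] at h2
    simp at h2

/-- If `A` is an expansive, row diagonally dominant integer matrix whose associated
directed graph (edge `i → j` iff `a_{ij} ≠ 0`) is strongly connected, then there are at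
most two sup-norm-one vectors `x` with `‖Ax‖_∞ = 1`, and they are negatives of each
other. -/
theorem stmt10 {n : ℕ} (A : Matrix (Fin n) (Fin n) ℤ)
    (hA : Expansive (A.map (Int.cast : ℤ → ℝ)))
    (hdom : ∀ j, (∑ k ∈ univ.erase j, |A j k|) + 1 ≤ |A j j|)
    (hconn : ∀ i j : Fin n, Relation.ReflTransGen (fun a b => A a b ≠ 0) i j) :
    ∀ x y : Fin n → ℝ,
      ‖x‖ = 1 → ‖(A.map (Int.cast : ℤ → ℝ)).mulVec x‖ = 1 →
      ‖y‖ = 1 → ‖(A.map (Int.cast : ℤ → ℝ)).mulVec y‖ = 1 →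
      y = x ∨ y = -x := by
  intro x y hx hAx hy hAy
  have hx1 := all_abs_one A hdom hconn x hx hAx
  have hy1 := all_abs_one A hdom hconn y hy hAy
  rcases Nat.eq_zero_or_pos n with hn | hn
  · subst hn
    left; funext i; exact i.elim0
  have i₀ : Fin n := ⟨0, hn⟩
  have hAny : ‖(A.map (Int.cast : ℤ → ℝ)).mulVec (-y)‖ = 1 := by
    rw [Matrix.mulVec_neg, norm_neg]; exact hAy
  have hny1 : ∀ k, |(-y) k| = 1 := fun k => by simp [abs_neg, hy1 k]
  rcases abs_eq_abs.mp (by rw [hx1 i₀, hy1 i₀] : |y i₀| = |x i₀|) with h0 | h0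
  · left
    funext k
    induction hconn i₀ k with
    | refl => exact h0
    | tail _ hbc ih => exact agree_prop A hdom x y hx1 hy1 hAx hAy hbc ih
  · right
    funext k
    have : (-y) i₀ = x i₀ := by rw [Pi.neg_apply, h0]; ring
    have hk : (-y) k = x k := by
      clear h0
      induction hconn i₀ k with
      | refl => exact this
      | tail _ hbc ih => exact agree_prop A hdom x (-y) hx1 hny1 hAx hAny hbc ih
    rw [Pi.neg_apply]
    rw [Pi.neg_apply] at hk
    linarith
end

section
/- Let A be a diagonally dominant integer matrix, suppose |x_m| = 1 and ‖x‖_∞ ≤ 1 and ‖Ax‖_∞ ≤ 1. Then for every j ≠ m with a_{mj} ≠ 0, x_j = −sign(x_m a_{mm} a_{mj}). -/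
open Matrix Finset

/-- Claim from the proof of the strong connectivity theorem: if row `m` of the integer
matrix `A` is diagonally dominant (`|a_mm| ≥ Σ_{j≠m} |a_mj| + 1`), `|x_m| = 1`,
`‖x‖_∞ ≤ 1` and `‖Ax‖_∞ ≤ 1`, then `x_j = −sign(x_m a_mm a_mj)` for every `j ≠ m`
with `a_mj ≠ 0`. -/
theorem stmt11 {n : ℕ} (A : Matrix (Fin n) (Fin n) ℤ) (m : Fin n)
    (hdom : (∑ j ∈ univ.erase m, |A m j|) + 1 ≤ |A m m|)
    (x : Fin n → ℝ) (hxm : |x m| = 1) (hx : ‖x‖ ≤ 1)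
    (hAx : ‖(A.map (Int.cast : ℤ → ℝ)).mulVec x‖ ≤ 1) :
    ∀ j, j ≠ m → A m j ≠ 0 →
      x j = - Real.sign (x m * (A m m : ℝ) * (A m j : ℝ)) := by
  -- pointwise bounds from the sup norms
  have hxj : ∀ j, |x j| ≤ 1 := fun j => by
    have h := norm_le_pi_norm x j
    rw [Real.norm_eq_abs] at h
    exact h.trans hx
  have hb : |((A.map (Int.cast : ℤ → ℝ)).mulVec x) m| ≤ 1 := by
    have h := norm_le_pi_norm ((A.map (Int.cast : ℤ → ℝ)).mulVec x) m
    rw [Real.norm_eq_abs] at h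
    exact h.trans hAx
  -- cast the diagonal dominance to ℝ
  have hdomR : (∑ j ∈ univ.erase m, |(A m j : ℝ)|) + 1 ≤ |(A m m : ℝ)| := by
    have := hdom
    push_cast [← Int.cast_abs]
    exact_mod_cast hdom
  have hsumnn : 0 ≤ ∑ j ∈ univ.erase m, |(A m j : ℝ)| :=
    Finset.sum_nonneg fun j _ => abs_nonneg _
  have hAmm : (0 : ℝ) < |(A m m : ℝ)| := by linarith
  -- t = a_mm * x_m, nonzero
  set t : ℝ := (A m m : ℝ) * x m with ht_def
  have habs_t : |t| = |(A m m : ℝ)| := by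
    rw [ht_def, abs_mul, hxm, mul_one]
  -- c is the sign of t
  set c : ℝ := if 0 < t then 1 else -1 with hc_def
  have hc1 : c = 1 ∨ c = -1 := by
    by_cases h : 0 < t <;> simp [hc_def, h]
  have hct : c * t = |(A m m : ℝ)| := by
    rcases lt_trichotomy t 0 with h | h | h
    · rw [hc_def, if_neg (by linarith), ← habs_t, abs_of_neg h]; ring
    · rw [← habs_t, h, abs_zero] at hAmm; exact absurd hAmm (lt_irrefl 0)
    · rw [hc_def, if_pos h, ← habs_t, abs_of_pos h]; ring
  have hcabs : |c| = 1 := by rcases hc1 with h | h <;> simp [h]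
  have hcc : c * c = 1 := by rcases hc1 with h | h <;> simp [h]
  -- expand the m-th coordinate of A x
  have hrow : ((A.map (Int.cast : ℤ → ℝ)).mulVec x) m
      = (∑ j ∈ univ.erase m, (A m j : ℝ) * x j) + t := by
    rw [ht_def]
    simp only [Matrix.mulVec, dotProduct, Matrix.map_apply]
    exact (Finset.sum_erase_add univ _ (mem_univ m)).symm
  -- the key sum of nonnegative terms that is ≤ 0
  have hterm_nn : ∀ j ∈ univ.erase m, 0 ≤ |(A m j : ℝ)| + c * ((A m j : ℝ) * x j) := by
    intro j _
    have h1 : |c * ((A m j : ℝ) * x j)| ≤ |(A m j : ℝ)| := by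
      rw [abs_mul, abs_mul, hcabs, one_mul]
      calc |(A m j : ℝ)| * |x j| ≤ |(A m j : ℝ)| * 1 :=
            mul_le_mul_of_nonneg_left (hxj j) (abs_nonneg _)
        _ = |(A m j : ℝ)| := mul_one _
    have := neg_abs_le (c * ((A m j : ℝ) * x j))
    linarith
  have hkey : ∀ j ∈ univ.erase m, |(A m j : ℝ)| + c * ((A m j : ℝ) * x j) = 0 := by
    have hle : ∑ j ∈ univ.erase m, (|(A m j : ℝ)| + c * ((A m j : ℝ) * x j)) ≤ 0 := by
      rw [Finset.sum_add_distrib, ← Finset.mul_sum]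
      have hS : ∑ j ∈ univ.erase m, (A m j : ℝ) * x j
          = ((A.map (Int.cast : ℤ → ℝ)).mulVec x) m - t := by rw [hrow]; ring
      rw [hS, mul_sub, hct]
      have hcb : c * ((A.map (Int.cast : ℤ → ℝ)).mulVec x) m ≤ 1 := by
        calc c * ((A.map (Int.cast : ℤ → ℝ)).mulVec x) m
            ≤ |c * ((A.map (Int.cast : ℤ → ℝ)).mulVec x) m| := le_abs_self _
          _ = |((A.map (Int.cast : ℤ → ℝ)).mulVec x) m| := by
              rw [abs_mul, hcabs, one_mul]
          _ ≤ 1 := hb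
      linarith
    intro j hj
    have hz : ∑ j ∈ univ.erase m, (|(A m j : ℝ)| + c * ((A m j : ℝ) * x j)) = 0 :=
      le_antisymm hle (Finset.sum_nonneg hterm_nn)
    exact (Finset.sum_eq_zero_iff_of_nonneg hterm_nn).mp hz j hj
  -- finish
  intro j hjm hAmj
  have hj : j ∈ univ.erase m := Finset.mem_erase.mpr ⟨hjm, mem_univ j⟩
  have hE : c * ((A m j : ℝ) * x j) = -|(A m j : ℝ)| := by
    have := hkey j hj
    linarith
  have ha0 : (A m j : ℝ) ≠ 0 := by exact_mod_cast hAmj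
  have htsign : x m * (A m m : ℝ) * (A m j : ℝ) = t * (A m j : ℝ) := by
    rw [ht_def]; ring
  have ht_eq : t = c * |(A m m : ℝ)| := by
    have : c * (c * t) = c * |(A m m : ℝ)| := by rw [hct]
    rw [← mul_assoc, hcc, one_mul] at this
    exact this
  rcases hc1 with hc | hc <;> rcases lt_or_gt_of_ne ha0 with ha | ha
  · -- c = 1, a < 0 : t > 0, t*a < 0, sign = -1 ; a * x j = -|a| = a ⇒ x j = 1
    have htpos : 0 < t := by rw [ht_eq, hc, one_mul]; exact hAmm
    rw [htsign, Real.sign_of_neg (mul_neg_of_pos_of_neg htpos ha)]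
    rw [hc, one_mul, abs_of_neg ha] at hE
    have : (A m j : ℝ) * x j = (A m j : ℝ) * 1 := by rw [mul_one]; linarith
    have := mul_left_cancel₀ ha0 this
    linarith
  · -- c = 1, a > 0 : t > 0, sign = 1 ; a * x j = -a ⇒ x j = -1
    have htpos : 0 < t := by rw [ht_eq, hc, one_mul]; exact hAmm
    rw [htsign, Real.sign_of_pos (mul_pos htpos ha)]
    rw [hc, one_mul, abs_of_pos ha] at hE
    have : (A m j : ℝ) * x j = (A m j : ℝ) * (-1) := by rw [mul_neg_one]; linarith
    have := mul_left_cancel₀ ha0 this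
    linarith
  · -- c = -1, a < 0 : t < 0, t*a > 0, sign = 1 ; -(a x j) = -(-a) ⇒ x j = -1
    have htneg : t < 0 := by rw [ht_eq, hc]; linarith
    rw [htsign, Real.sign_of_pos (mul_pos_of_neg_of_neg htneg ha)]
    rw [hc, abs_of_neg ha] at hE
    have : (A m j : ℝ) * x j = (A m j : ℝ) * (-1) := by rw [mul_neg_one]; linarith
    have := mul_left_cancel₀ ha0 this
    linarith
  · -- c = -1, a > 0 : t < 0, t*a < 0, sign = -1 ; -(a x j) = -a ⇒ x j = 1
    have htneg : t < 0 := by rw [ht_eq, hc]; linarith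
    rw [htsign, Real.sign_of_neg (mul_neg_of_neg_of_pos htneg ha)]
    rw [hc, abs_of_pos ha] at hE
    have : (A m j : ℝ) * x j = (A m j : ℝ) * 1 := by rw [mul_one]; linarith
    have := mul_left_cancel₀ ha0 this
    linarith
end

section
/- Let K be a compact set whose integer translates tile ℝ^n in the a.e. sense (Σ_{k∈ℤ^n} 1_K(x+k) = 1 for a.e. x). Then in fact for every x ∈ ℝ^n there exists k ∈ ℤ^n with x + k ∈ K, i.e., Σ_{k∈ℤ^n} 1_K(x+k) ≥ 1 for all x. -/
open MeasureTheory

lemma isClosed_range_zvec {n : ℕ} : IsClosed (Set.range (zvec (n := n))) := by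
  have : Set.range (zvec (n := n)) =
      ⋂ i : Fin n, (fun v : Fin n → ℝ => v i) ⁻¹' Set.range ((↑) : ℤ → ℝ) := by
    ext v
    simp only [Set.mem_iInter, Set.mem_preimage, Set.mem_range]
    constructor
    · rintro ⟨k, rfl⟩ i; exact ⟨k i, rfl⟩  -- zvec def
    · intro h
      choose k hk using h
      refine ⟨k, ?_⟩
      funext i
      exact hk i
  rw [this]
  exact isClosed_iInter fun i =>
    IsClosed.preimage (continuous_apply i) Int.isClosedEmbedding_coe_real.isClosed_range

/-- If a compact set `K` tiles `ℝ^n` by integer translations in the a.e. sense, then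
in fact every point of `ℝ^n` lies in some integer translate of `K`. -/
theorem stmt14 {n : ℕ} (K : Set (Fin n → ℝ)) (hK : IsCompact K) (htile : TilesAE K) :
    ∀ x : Fin n → ℝ, ∃ k : Fin n → ℤ, x + zvec k ∈ K := by
  intro x
  -- for each m, pick y m in ball x (1/(m+1)) with a witness
  have hsel : ∀ m : ℕ, ∃ y : Fin n → ℝ, y ∈ Metric.ball x (1 / (m + 1)) ∧
      ∃ k : Fin n → ℤ, y + zvec k ∈ K := by
    intro m
    have hpos : 0 < volume (Metric.ball x (1 / (m + 1) : ℝ)) := by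
      apply Metric.measure_ball_pos
      positivity
    have : (Metric.ball x (1 / (m + 1) : ℝ) ∩
        {y | ∃! k : Fin n → ℤ, y + zvec k ∈ K}).Nonempty := by
      by_contra h
      rw [Set.not_nonempty_iff_eq_empty] at h
      have : volume (Metric.ball x (1 / (m + 1) : ℝ)) = 0 := by
        have hsub : Metric.ball x (1 / (m + 1) : ℝ) ⊆
            {y | ¬ ∃! k : Fin n → ℤ, y + zvec k ∈ K} := by
          intro y hy hy'
          exact Set.eq_empty_iff_forall_notMem.mp h y ⟨hy, hy'⟩
        refine measure_mono_null hsub ?_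
        exact htile
      exact hpos.ne' this
    obtain ⟨y, hy1, k, hk, -⟩ := this
    exact ⟨y, hy1, k, hk⟩
  choose y hyball k hk using hsel
  have hylim : Filter.Tendsto y Filter.atTop (nhds x) := by
    rw [tendsto_iff_dist_tendsto_zero]
    apply squeeze_zero (fun m => dist_nonneg) (fun m => (Metric.mem_ball.mp (hyball m)).le)
    exact tendsto_one_div_add_atTop_nhds_zero_nat
  obtain ⟨p, hpK, φ, hφ, hplim⟩ := hK.tendsto_subseq (fun m => hk m)
  have hzlim : Filter.Tendsto (fun m => zvec (k (φ m))) Filter.atTop (nhds (p - x)) := by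
    have : (fun m => zvec (k (φ m))) =
        fun m => (y (φ m) + zvec (k (φ m))) - y (φ m) := by
      funext m; abel
    rw [this]
    exact hplim.sub (hylim.comp hφ.tendsto_atTop)
  have hmem : p - x ∈ Set.range (zvec (n := n)) :=
    isClosed_range_zvec.mem_of_tendsto hzlim (Filter.Eventually.of_forall fun m => ⟨_, rfl⟩)
  obtain ⟨k₀, hk₀⟩ := hmem
  refine ⟨k₀, ?_⟩
  rw [hk₀]
  convert hpK using 1
  abel
end

section
/- Let Γ ⊂ ℤ^n be a full-rank sublattice of index 2 and let K ⊂ ℝ^n be a compact set with connected boundary that tiles ℝ^n by ℤ^n-translations. Then no open set containing K packs ℝ^n by Γ-translations. -/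
open MeasureTheory

lemma zvec_zero {n : ℕ} : zvec (0 : Fin n → ℤ) = 0 := by
  funext i; simp [zvec]

lemma zvec_sub {n : ℕ} (k k' : Fin n → ℤ) : zvec (k - k') = zvec k - zvec k' := by
  funext i; simp [zvec]

lemma zvec_ne_zero {n : ℕ} {k : Fin n → ℤ} (h : k ≠ 0) : zvec k ≠ 0 := by
  intro h0
  apply h
  funext i
  have := congrFun h0 i
  simpa [zvec] using this

lemma lattice_finite {n : ℕ} (C : ℝ) : {k : Fin n → ℤ | ‖zvec k‖ ≤ C}.Finite := by
  apply Set.Finite.subset (Set.Finite.pi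
    (t := fun _ : Fin n => (↑(Finset.Icc (-⌈C⌉) ⌈C⌉) : Set ℤ))
    (fun i => (Finset.Icc _ _).finite_toSet))
  intro k hk
  simp only [Set.mem_pi, Set.mem_univ, Finset.coe_Icc, Set.mem_Icc, forall_true_left]
  intro i
  have h1 : |(k i : ℝ)| ≤ C := by
    have := norm_le_pi_norm (zvec k) i
    simp only [zvec, Real.norm_eq_abs] at this
    exact this.trans hk
  have h2 : |k i| ≤ ⌈C⌉ := by
    have : (|k i| : ℝ) ≤ (⌈C⌉ : ℝ) := by
      calc (|k i| : ℝ) = |(k i : ℝ)| := by push_cast; ring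
      _ ≤ C := h1
      _ ≤ ⌈C⌉ := Int.le_ceil C
    exact_mod_cast this
  constructor
  · linarith [(abs_le.mp h2).1]
  · exact (abs_le.mp h2).2

/-- In a subgroup of index 2, the difference of two non-members is a member. -/
lemma coset_sub {n : ℕ} (Γ : AddSubgroup (Fin n → ℤ)) (hΓ : Γ.index = 2)
    {k k' : Fin n → ℤ} (hk : k ∉ Γ) (hk' : k' ∉ Γ) : k - k' ∈ Γ := by
  by_contra h
  have hfin : Finite ((Fin n → ℤ) ⧸ Γ) := by
    apply Nat.finite_of_card_ne_zero
    rw [show Nat.card ((Fin n → ℤ) ⧸ Γ) = Γ.index from rfl, hΓ]; norm_num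
  have : Fintype ((Fin n → ℤ) ⧸ Γ) := Fintype.ofFinite _
  have h3 : 2 < Fintype.card ((Fin n → ℤ) ⧸ Γ) := by
    rw [Fintype.two_lt_card_iff]
    refine ⟨0, QuotientAddGroup.mk k, QuotientAddGroup.mk k', ?_, ?_, ?_⟩
    · intro he; exact hk (by rwa [eq_comm, QuotientAddGroup.eq_zero_iff] at he)
    · intro he; exact hk' (by rwa [eq_comm, QuotientAddGroup.eq_zero_iff] at he)
    · intro he
      rw [QuotientAddGroup.eq] at he
      exact h (by simpa [neg_add_eq_sub, sub_eq_add_neg, neg_add_rev] using neg_mem he)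
  rw [← Nat.card_eq_fintype_card, show Nat.card ((Fin n → ℤ) ⧸ Γ) = Γ.index from rfl, hΓ] at h3
  omega

/-- Every frontier point of a compact a.e.-tile lies in some nonzero translate of the tile. -/
lemma frontier_mem_translate {n : ℕ} {K : Set (Fin n → ℝ)} (hK : IsCompact K)
    (htile : TilesAE K) {x : Fin n → ℝ} (hx : x ∈ frontier K) :
    ∃ k : Fin n → ℤ, k ≠ 0 ∧ x + zvec k ∈ K := by
  classical
  by_contra h
  push_neg at h
  obtain ⟨R, hR⟩ := hK.isBounded.subset_closedBall 0
  set C : ℝ := ‖x‖ + |R| + 1 with hC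
  set S : Set (Fin n → ℤ) := {k | k ≠ 0 ∧ ‖zvec k‖ ≤ C} with hS
  have hSfin : S.Finite := (lattice_finite C).subset (fun k hk => hk.2)
  set F : Set (Fin n → ℝ) := ⋃ k ∈ S, (fun y => y + zvec k) ⁻¹' K with hF
  have hFclosed : IsClosed F :=
    hSfin.isClosed_biUnion (fun k _ => hK.isClosed.preimage (by continuity))
  have hxF : x ∉ F := by
    intro hxF
    simp only [hF, Set.mem_iUnion, Set.mem_preimage] at hxF
    obtain ⟨k, hkS, hkK⟩ := hxF
    exact h k hkS.1 hkK
  obtain ⟨ε, hε, hball⟩ := Metric.isOpen_iff.mp hFclosed.isOpen_compl x hxF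
  set ε' : ℝ := min ε 1 with hε'
  have hε'pos : 0 < ε' := lt_min hε one_pos
  have hxint : x ∉ interior K := hx.2
  have hmeets : (Metric.ball x ε' ∩ Kᶜ).Nonempty := by
    by_contra hemp
    rw [Set.not_nonempty_iff_eq_empty] at hemp
    apply hxint
    apply mem_interior.mpr
    refine ⟨Metric.ball x ε', ?_, Metric.isOpen_ball, Metric.mem_ball_self hε'pos⟩
    intro y hy
    by_contra hyK
    exact Set.eq_empty_iff_forall_notMem.mp hemp y ⟨hy, hyK⟩
  set W : Set (Fin n → ℝ) := Metric.ball x ε' ∩ Kᶜ with hW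
  have hWopen : IsOpen W := Metric.isOpen_ball.inter hK.isClosed.isOpen_compl
  have hWpos : 0 < volume W := hWopen.measure_pos volume hmeets
  have hWbad : W ⊆ {y | ¬ ∃ k : Fin n → ℤ, y + zvec k ∈ K} := by
    rintro y ⟨hyb, hyK⟩ ⟨k, hk⟩
    rcases eq_or_ne k 0 with rfl | hk0
    · apply hyK
      simpa [zvec_zero] using hk
    · have hkS : k ∈ S := by
        refine ⟨hk0, ?_⟩
        have h1 : ‖y + zvec k‖ ≤ |R| := by
          have := hR hk
          simpa [Metric.mem_closedBall, dist_zero_right] using this.trans (le_abs_self R)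
        have h2 : ‖y‖ ≤ ‖x‖ + 1 := by
          have : dist y x < 1 := lt_of_lt_of_le (Metric.mem_ball.mp hyb) (min_le_right _ _)
          calc ‖y‖ = ‖x + (y - x)‖ := by ring_nf
          _ ≤ ‖x‖ + ‖y - x‖ := norm_add_le _ _
          _ ≤ ‖x‖ + 1 := by rw [← dist_eq_norm] at *; linarith
        calc ‖zvec k‖ = ‖(y + zvec k) - y‖ := by ring_nf
        _ ≤ ‖y + zvec k‖ + ‖y‖ := norm_sub_le _ _
        _ ≤ |R| + (‖x‖ + 1) := add_le_add h1 h2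
        _ = C := by ring
      have : y ∈ F := Set.mem_biUnion hkS hk
      exact hball (lt_of_lt_of_le (Metric.mem_ball.mp hyb) (min_le_left _ _)) this
  have hnull : volume {y : Fin n → ℝ | ¬ ∃ k : Fin n → ℤ, y + zvec k ∈ K} = 0 := by
    have := htile
    rw [TilesAE, MeasureTheory.ae_iff] at this
    apply measure_mono_null _ this
    intro y hy
    simp only [Set.mem_setOf_eq] at hy ⊢
    intro hcon
    obtain ⟨k, hk, -⟩ := hcon
    exact hy ⟨k, hk⟩
  exact absurd (measure_mono_null hWbad hnull) (by simpa using hWpos.ne')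

/-- A compact set cannot have its whole frontier shifted into itself by a nonzero vector. -/
lemma no_shift {n : ℕ} {K : Set (Fin n → ℝ)} (hK : IsCompact K) (hne : K.Nonempty)
    {v : Fin n → ℝ} (hv : v ≠ 0) (hsub : frontier K ⊆ {y | y + v ∈ K}) : False := by
  set f : (Fin n → ℝ) → ℝ := fun y => ∑ i, y i * v i with hf
  have hfc : Continuous f := by
    apply continuous_finset_sum
    intro i _
    exact (continuous_apply i).mul continuous_const
  obtain ⟨x, hxK, hmax⟩ := hK.exists_isMaxOn hne hfc.continuousOn
  have hvsq : 0 < ∑ i, v i * v i := by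
    have : ∃ i, v i ≠ 0 := by
      by_contra hc; push_neg at hc; exact hv (funext hc)
    obtain ⟨i, hi⟩ := this
    apply Finset.sum_pos' (fun j _ => mul_self_nonneg _)
    exact ⟨i, Finset.mem_univ i, mul_self_pos.mpr hi⟩
  have hfadd : ∀ (y : Fin n → ℝ) (δ : ℝ), f (y + δ • v) = f y + δ * ∑ i, v i * v i := by
    intro y δ
    simp only [hf, Pi.add_apply, Pi.smul_apply, smul_eq_mul, Finset.mul_sum]
    rw [← Finset.sum_add_distrib]
    congr 1; funext i; ring
  have hxfr : x ∈ frontier K := by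
    rw [frontier, hK.isClosed.closure_eq]
    refine ⟨hxK, ?_⟩
    intro hint
    obtain ⟨ε, hε, hball⟩ := Metric.isOpen_iff.mp isOpen_interior x hint
    set δ : ℝ := ε / (‖v‖ + 1) with hδ
    have hδpos : 0 < δ := by positivity
    have hy : x + δ • v ∈ K := by
      apply interior_subset
      apply hball
      rw [Metric.mem_ball, dist_self_add_left, norm_smul]
      calc ‖δ‖ * ‖v‖ = δ * ‖v‖ := by rw [Real.norm_eq_abs, abs_of_pos hδpos]
      _ < δ * (‖v‖ + 1) := by nlinarith
      _ = ε := by rw [hδ, div_mul_cancel₀]; positivity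
    have := hmax hy
    simp only [Set.mem_setOf_eq] at this
    rw [hfadd] at this
    nlinarith
  have hvK : x + v ∈ K := hsub hxfr
  have := hmax hvK
  have h1 : f (x + v) = f x + ∑ i, v i * v i := by
    have := hfadd x 1
    simpa using this
  simp only [Set.mem_setOf_eq, h1] at this
  linarith

/-- A preconnected set covered by two disjoint closed sets and meeting the first
lies inside the first (in a normal space). -/
lemma preconnected_subset_of_closed {X : Type*} [TopologicalSpace X] [NormalSpace X]
    {s A B : Set X} (hs : IsPreconnected s) (hA : IsClosed A) (hB : IsClosed B)
    (hAB : Disjoint A B) (hsub : s ⊆ A ∪ B) (hne : (s ∩ A).Nonempty) : s ⊆ A := by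
  obtain ⟨u, v, hu, hv, hAu, hBv, huv⟩ := NormalSpace.normal A B hA hB hAB
  have hsu : s ⊆ u := by
    apply hs.subset_left_of_subset_union hu hv huv
    · exact hsub.trans (Set.union_subset_union hAu hBv)
    · obtain ⟨x, hxs, hxA⟩ := hne
      exact ⟨x, hxs, hAu hxA⟩
  intro x hxs
  rcases hsub hxs with hxA | hxB
  · exact hxA
  · exact absurd (hBv hxB) (fun hxv => huv.ne_of_mem (hsu hxs) hxv rfl)

/-- If `Γ ⊂ ℤ^n` is a full-rank sublattice of index 2 and `K` is a compact set with
connected boundary tiling `ℝ^n` by `ℤ^n`-translations, then no open set containing `K`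
packs `ℝ^n` by `Γ`-translations. -/
theorem stmt16 {n : ℕ} (Γ : AddSubgroup (Fin n → ℤ)) (hΓ : Γ.index = 2)
    (K : Set (Fin n → ℝ)) (hK : IsCompact K) (hbd : IsConnected (frontier K))
    (htile : TilesAE K) :
    ∀ U : Set (Fin n → ℝ), IsOpen U → K ⊆ U →
      ¬ (∀ γ₁ ∈ Γ, ∀ γ₂ ∈ Γ, γ₁ ≠ γ₂ →
          volume (((zvec γ₁ + ·) '' U) ∩ ((zvec γ₂ + ·) '' U)) = 0) := by
  intro U hU hKU hpack
  have hKcl : IsClosed K := hK.isClosed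
  have hfr_ne : (frontier K).Nonempty := hbd.nonempty
  have hKne : K.Nonempty := by
    obtain ⟨x, hx⟩ := hfr_ne
    exact ⟨x, hKcl.frontier_subset hx⟩
  -- Step 1: it suffices to find γ ∈ Γ \ {0} with K ∩ (K - γ) nonempty
  have key : ¬ ∃ γ : Fin n → ℤ, γ ∈ Γ ∧ γ ≠ 0 ∧ ∃ x, x ∈ K ∧ x + zvec γ ∈ K := by
    rintro ⟨γ, hγΓ, hγ0, x, hxK, hxγK⟩
    have h0 := hpack 0 (zero_mem Γ) γ hγΓ (Ne.symm hγ0)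
    have himg1 : ((zvec (0 : Fin n → ℤ) + ·) '' U) = U := by simp [zvec_zero]
    have hopen2 : IsOpen ((zvec γ + ·) '' U) := (isOpenMap_add_left (zvec γ)) U hU
    have hpt : (zvec γ + x) ∈ U ∩ ((zvec γ + ·) '' U) :=
      ⟨by rw [add_comm]; exact hKU hxγK, ⟨x, hKU hxK, rfl⟩⟩
    have hpos := (hU.inter hopen2).measure_pos volume ⟨_, hpt⟩
    rw [himg1] at h0
    rw [h0] at hpos
    exact lt_irrefl _ hpos
  apply key
  by_contra hno
  push_neg at hno
  -- Step 2: set up the finite closed cover of the frontier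
  obtain ⟨R, hR⟩ := hK.isBounded.subset_closedBall 0
  set T : Set (Fin n → ℤ) := {k | k ≠ 0 ∧ ‖zvec k‖ ≤ 2 * |R|} with hT
  have hTfin : T.Finite := (lattice_finite (2 * |R|)).subset (fun k hk => hk.2)
  set C : (Fin n → ℤ) → Set (Fin n → ℝ) :=
    fun k => frontier K ∩ {y | y + zvec k ∈ K} with hCdef
  have hCclosed : ∀ k, IsClosed (C k) := fun k =>
    isClosed_frontier.inter (hKcl.preimage (by continuity))
  have hbound : ∀ y ∈ K, ‖y‖ ≤ |R| := by
    intro y hy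
    have := hR hy
    simpa [Metric.mem_closedBall, dist_zero_right] using this.trans (le_abs_self R)
  have hcover : frontier K ⊆ ⋃ k ∈ T, C k := by
    intro x hx
    obtain ⟨k, hk0, hkK⟩ := frontier_mem_translate hK htile hx
    have hxK : x ∈ K := hKcl.frontier_subset hx
    have hkb : ‖zvec k‖ ≤ 2 * |R| := by
      calc ‖zvec k‖ = ‖(x + zvec k) - x‖ := by ring_nf
      _ ≤ ‖x + zvec k‖ + ‖x‖ := norm_sub_le _ _
      _ ≤ |R| + |R| := add_le_add (hbound _ hkK) (hbound _ hxK)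
      _ = 2 * |R| := by ring
    exact Set.mem_biUnion (⟨hk0, hkb⟩ : k ∈ T) ⟨hx, hkK⟩
  have hnotin : ∀ k ∈ T, (C k).Nonempty → k ∉ Γ := by
    rintro k hkT ⟨x, hxfr, hxk⟩ hkΓ
    exact hno k hkΓ hkT.1 x (hKcl.frontier_subset hxfr) hxk
  by_cases hpair : ∃ k ∈ T, ∃ k' ∈ T, k ≠ k' ∧ (C k ∩ C k').Nonempty
  · -- two distinct translates share a frontier point: their difference is in Γ
    obtain ⟨k, hkT, k', hk'T, hkk', x, hx1, hx2⟩ := hpair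
    have hkΓ : k ∉ Γ := hnotin k hkT ⟨x, hx1⟩
    have hk'Γ : k' ∉ Γ := hnotin k' hk'T ⟨x, hx2⟩
    have hsubΓ : k - k' ∈ Γ := coset_sub Γ hΓ hkΓ hk'Γ
    have hne0 : k - k' ≠ 0 := sub_ne_zero.mpr hkk'
    have hmem : (x + zvec k') + zvec (k - k') ∈ K := by
      rw [zvec_sub]
      have : x + zvec k' + (zvec k - zvec k') = x + zvec k := by abel
      rw [this]
      exact hx1.2
    exact hno (k - k') hsubΓ hne0 (x + zvec k') hx2.2 hmem
  · -- all the pieces are pairwise disjoint: the frontier lies in a single one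
    push_neg at hpair
    obtain ⟨x₀, hx₀⟩ := hfr_ne
    obtain ⟨k₀, hk₀T, hx₀C⟩ := Set.mem_iUnion₂.mp (hcover hx₀)
    set B : Set (Fin n → ℝ) := ⋃ k ∈ T \ {k₀}, C k with hB
    have hBclosed : IsClosed B :=
      (hTfin.subset Set.diff_subset).isClosed_biUnion (fun k _ => hCclosed k)
    have hdisj : Disjoint (C k₀) B := by
      rw [Set.disjoint_left]
      rintro x hxA hxB
      obtain ⟨k, hkM, hxC⟩ := Set.mem_iUnion₂.mp hxB
      have hkne : k₀ ≠ k := fun he => hkM.2 (by simp [he.symm])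
      exact Set.eq_empty_iff_forall_notMem.mp (hpair k₀ hk₀T k hkM.1 hkne) x ⟨hxA, hxC⟩
    have hsub2 : frontier K ⊆ C k₀ ∪ B := by
      intro x hx
      obtain ⟨k, hkT, hxC⟩ := Set.mem_iUnion₂.mp (hcover hx)
      rcases eq_or_ne k k₀ with rfl | hne
      · exact Or.inl hxC
      · exact Or.inr (Set.mem_biUnion ⟨hkT, by simp [hne]⟩ hxC)
    have hfrsub : frontier K ⊆ C k₀ :=
      preconnected_subset_of_closed hbd.isPreconnected (hCclosed k₀) hBclosed hdisj hsub2
        ⟨x₀, hx₀, hx₀C⟩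
    exact no_shift hK hKne (zvec_ne_zero hk₀T.1)
      (fun y hy => (hfrsub hy).2)
end

section
/- Let G̃ be a compact subset of ℝ^n whose boundary has Lebesgue measure zero. Then there exists a compact subset G ⊆ G̃ with m(∂G) = 0 such that G packs ℝ^n by integer translations and ∪_{k∈ℤ^n}(G + k) = ∪_{k∈ℤ^n}(G̃ + k) up to a set of measure zero. -/
open MeasureTheory

open Set

lemma aux_hyperplane {n : ℕ} (i : Fin n) (c : ℝ) :
    volume {x : Fin n → ℝ | x i = c} = 0 := by
  classical
  have h : {x : Fin n → ℝ | x i = c} =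
      Set.pi Set.univ (fun j => if j = i then ({c} : Set ℝ) else Set.univ) := by
    ext x
    simp only [Set.mem_setOf_eq, Set.mem_pi, Set.mem_univ, forall_true_left]
    constructor
    · intro hx j
      by_cases hj : j = i
      · subst hj; simp [hx]
      · simp [hj]
    · intro hx
      have := hx i
      simpa using this
  rw [h, volume_pi_pi]
  refine Finset.prod_eq_zero (Finset.mem_univ i) ?_
  simp

lemma aux_image_vol {n : ℕ} (a : Fin n → ℝ) (s : Set (Fin n → ℝ)) :
    volume ((a + ·) '' s) = volume s := by
  have h : (a + ·) '' s = (fun x => -a + x) ⁻¹' s := by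
    ext y
    simp only [Set.mem_image, Set.mem_preimage]
    constructor
    · rintro ⟨x, hx, rfl⟩; simpa using hx
    · intro hy; exact ⟨-a + y, hy, by abel⟩
  rw [h, measure_preimage_add]

lemma aux_frontier_image {n : ℕ} (a : Fin n → ℝ) (s : Set (Fin n → ℝ)) :
    frontier ((a + ·) '' s) = (a + ·) '' frontier s := by
  have := (Homeomorph.addLeft a).image_frontier s
  simpa [Homeomorph.addLeft] using this.symm

lemma aux_frontier_preimage {n : ℕ} (a : Fin n → ℝ) (s : Set (Fin n → ℝ)) :
    frontier ((a + ·) ⁻¹' s) = (a + ·) ⁻¹' frontier s := by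
  have := (Homeomorph.addLeft a).preimage_frontier s
  simpa [Homeomorph.addLeft] using this.symm

lemma aux_cube {n : ℕ} : volume (frontier (Set.Icc (0 : Fin n → ℝ) 1)) = 0 := by
  have hIoo : IsOpen (Set.pi Set.univ fun _ : Fin n => Set.Ioo (0:ℝ) 1) :=
    isOpen_set_pi Set.finite_univ (fun _ _ => isOpen_Ioo)
  have hsubQ : (Set.pi Set.univ fun _ : Fin n => Set.Ioo (0:ℝ) 1) ⊆ Set.Icc 0 1 := by
    rw [← Set.pi_univ_Icc]
    exact Set.pi_mono fun i _ => Set.Ioo_subset_Icc_self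
  have h1 : frontier (Set.Icc (0 : Fin n → ℝ) 1) ⊆
      Set.Icc (0 : Fin n → ℝ) 1 \ Set.pi Set.univ (fun _ => Set.Ioo (0:ℝ) 1) :=
    Set.diff_subset_diff (le_of_eq isClosed_Icc.closure_eq)
      (hIoo.subset_interior_iff.mpr hsubQ)
  refine measure_mono_null h1 ?_
  rw [measure_diff hsubQ (hIoo.measurableSet.nullMeasurableSet) (by
    rw [volume_pi_pi]; simp [Real.volume_Ioo])]
  rw [volume_pi_pi]
  rw [Real.volume_Icc_pi]
  simp [Real.volume_Ioo]

lemma aux_frontier_biUnion {α β : Type*} [TopologicalSpace β] (t : Finset α) (u : α → Set β) :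
    frontier (⋃ i ∈ t, u i) ⊆ ⋃ i ∈ t, frontier (u i) := by
  classical
  induction t using Finset.induction_on with
  | empty => simp
  | @insert a s ha ih =>
    simp only [Finset.set_biUnion_insert]
    refine (frontier_union_subset _ _).trans ?_
    refine Set.union_subset ?_ ?_
    · exact (Set.inter_subset_left).trans (Set.subset_union_left)
    · exact (Set.inter_subset_right).trans (ih.trans Set.subset_union_right)

/-- If `G̃` is a compact subset of `ℝ^n` whose boundary has measure zero, then there is
a compact subset `G ⊆ G̃` with boundary of measure zero which packs `ℝ^n` by integer
translations and whose integer translates cover the same set as those of `G̃`, up to a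
set of measure zero. -/
theorem stmt19 {n : ℕ} (Gt : Set (Fin n → ℝ)) (hGt : IsCompact Gt)
    (hbd : volume (frontier Gt) = 0) :
    ∃ G : Set (Fin n → ℝ), G ⊆ Gt ∧ IsCompact G ∧ volume (frontier G) = 0 ∧
      (∀ k k' : Fin n → ℤ, k ≠ k' →
        volume (((zvec k + ·) '' G) ∩ ((zvec k' + ·) '' G)) = 0) ∧
      volume (((⋃ k : Fin n → ℤ, (zvec k + ·) '' G) \
          (⋃ k : Fin n → ℤ, (zvec k + ·) '' Gt)) ∪
        ((⋃ k : Fin n → ℤ, (zvec k + ·) '' Gt) \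
          (⋃ k : Fin n → ℤ, (zvec k + ·) '' G))) = 0 := by
  classical
  obtain ⟨f, hf⟩ := exists_injective_nat (Fin n → ℤ)
  have zvec_add : ∀ a b : Fin n → ℤ, zvec (a + b) = zvec a + zvec b := by
    intro a b; funext i; simp [zvec]
  set Q : Set (Fin n → ℝ) := Set.Icc 0 1 with hQdef
  set A : (Fin n → ℤ) → Set (Fin n → ℝ) := fun k => ((zvec k + ·) ⁻¹' Gt) ∩ Q with hAdef
  have hAclosed : ∀ k, IsClosed (A k) := fun k =>
    (hGt.isClosed.preimage (continuous_const.add continuous_id)).inter isClosed_Icc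
  have hAsubQ : ∀ k, A k ⊆ Q := fun k => Set.inter_subset_right
  have hAcomp : ∀ k, IsCompact (A k) := fun k =>
    isCompact_Icc.of_isClosed_subset (hAclosed k) (hAsubQ k)
  have hAfr : ∀ k, volume (frontier (A k)) = 0 := by
    intro k
    have h1 : frontier (A k) ⊆ frontier ((zvec k + ·) ⁻¹' Gt) ∪ frontier Q :=
      (frontier_inter_subset _ _).trans
        (Set.union_subset_union Set.inter_subset_left Set.inter_subset_right)
    refine measure_mono_null h1 (measure_union_null ?_ ?_)
    · rw [aux_frontier_preimage]
      rw [show ((zvec k + ·) ⁻¹' frontier Gt) = ((fun x => zvec k + x) ⁻¹' frontier Gt) from rfl,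
        measure_preimage_add]
      exact hbd
    · exact aux_cube
  -- finiteness of the set of relevant translates
  obtain ⟨R, hR⟩ := isBounded_iff_forall_norm_le.mp hGt.isBounded
  have hSfin : {k : Fin n → ℤ | (A k).Nonempty}.Finite := by
    have hsub : {k : Fin n → ℤ | (A k).Nonempty} ⊆
        Set.pi Set.univ (fun _ : Fin n => (Set.Icc (-(⌈R⌉+1)) (⌈R⌉+1) : Set ℤ)) := by
      rintro k ⟨x, hx1, hx2⟩
      rw [Set.mem_univ_pi]
      intro i
      have hxi : x i ∈ Set.Icc (0:ℝ) 1 := by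
        rw [hQdef, ← Set.pi_univ_Icc] at hx2
        simpa using hx2 i (Set.mem_univ i)
      have hnorm : |(k i : ℝ) + x i| ≤ R := by
        have h1 : ‖(zvec k + x) i‖ ≤ ‖zvec k + x‖ := norm_le_pi_norm _ i
        have h2 := hR _ hx1
        simpa [zvec, Real.norm_eq_abs] using h1.trans h2
      have hki : |(k i : ℝ)| ≤ R + 1 := by
        have h3 : |(k i : ℝ)| = |((k i : ℝ) + x i) - x i| := by ring_nf
        rw [h3]
        refine (abs_sub _ _).trans (add_le_add hnorm ?_)
        rw [abs_le]; exact ⟨by linarith [hxi.1], by linarith [hxi.2]⟩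
      rw [abs_le] at hki
      constructor
      · have h4 : ((-(⌈R⌉+1) : ℤ) : ℝ) ≤ (k i : ℝ) := by
          push_cast
          have := Int.le_ceil R
          linarith [hki.1]
        exact_mod_cast h4
      · have h4 : ((k i : ℝ)) ≤ (((⌈R⌉+1) : ℤ) : ℝ) := by
          push_cast
          have := Int.le_ceil R
          linarith [hki.2]
        exact_mod_cast h4
    exact (Set.Finite.pi (fun _ => Set.finite_Icc _ _)).subset hsub
  set S : Finset (Fin n → ℤ) := hSfin.toFinset with hSdef
  have hmemS : ∀ k, k ∈ S ↔ (A k).Nonempty := fun k => hSfin.mem_toFinset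
  set C : (Fin n → ℤ) → Set (Fin n → ℝ) :=
    fun k => ⋃ k' ∈ S.filter (fun k' => f k' < f k), A k' with hCdef
  have hCfr : ∀ k, volume (frontier (C k)) = 0 := by
    intro k
    refine measure_mono_null (aux_frontier_biUnion _ _) ?_
    rw [← Finset.set_biUnion_coe, measure_biUnion_null_iff (S.filter _).countable_toSet]
    exact fun k' _ => hAfr k'
  set B : (Fin n → ℤ) → Set (Fin n → ℝ) := fun k => closure (A k \ C k) with hBdef
  have hBsubA : ∀ k, B k ⊆ A k := fun k =>
    closure_minimal Set.diff_subset (hAclosed k)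
  have hBcomp : ∀ k, IsCompact (B k) := fun k =>
    (hAcomp k).of_isClosed_subset isClosed_closure (hBsubA k)
  have hBfr : ∀ k, volume (frontier (B k)) = 0 := by
    intro k
    refine measure_mono_null frontier_closure_subset ?_
    have h2 : frontier (A k \ C k) ⊆ frontier (A k) ∪ frontier (C k) := by
      have h3 := frontier_inter_subset (A k) (C k)ᶜ
      rw [Set.diff_eq]
      refine h3.trans ?_
      rw [frontier_compl]
      exact Set.union_subset_union Set.inter_subset_left Set.inter_subset_right
    exact measure_mono_null h2 (measure_union_null (hAfr k) (hCfr k))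
  -- distinct integer translates of the unit cube overlap in measure zero
  have hQtrans : ∀ a b : Fin n → ℤ, a ≠ b →
      volume (((zvec a + ·) '' Q) ∩ ((zvec b + ·) '' Q)) = 0 := by
    have key : ∀ (a b : Fin n → ℤ) (i : Fin n), a i < b i →
        ((zvec a + ·) '' Q) ∩ ((zvec b + ·) '' Q) ⊆ {x | x i = (b i : ℝ)} := by
      intro a b i hi x hx
      obtain ⟨hxa, hxb⟩ := hx
      rw [hQdef, Set.image_const_add_Icc] at hxa hxb
      rw [Set.mem_Icc] at hxa hxb
      have h1 : x i ≤ (zvec a + 1) i := hxa.2 i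
      have h2 : (zvec b + 0) i ≤ x i := hxb.1 i
      have h3 : (a i : ℝ) + 1 ≤ (b i : ℝ) := by
        have : a i + 1 ≤ b i := hi
        exact_mod_cast this
      simp only [Pi.add_apply, Pi.one_apply, Pi.zero_apply, zvec] at h1 h2
      show x i = (b i : ℝ)
      linarith
    intro a b hab
    have hex : ∃ i, a i ≠ b i := by
      by_contra h; push_neg at h; exact hab (funext h)
    obtain ⟨i, hi⟩ := hex
    rcases lt_or_gt_of_ne hi with h | h
    · exact measure_mono_null (key a b i h) (aux_hyperplane i _)
    · rw [Set.inter_comm]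
      exact measure_mono_null (key b a i h) (aux_hyperplane i _)
  -- overlap of two pieces
  have hBB : ∀ j, j ∈ S → ∀ j', f j < f j' → volume (B j ∩ B j') = 0 := by
    intro j hj j' hlt
    have h1 : B j' ⊆ closure ((A j)ᶜ) := by
      apply closure_mono
      intro x hx hxAj
      exact hx.2 (Set.mem_iUnion₂.mpr ⟨j, Finset.mem_filter.mpr ⟨hj, hlt⟩, hxAj⟩)
    have h2 : B j ∩ B j' ⊆ frontier (A j) := by
      rw [frontier_eq_closure_inter_closure, (hAclosed j).closure_eq]
      exact Set.inter_subset_inter (hBsubA j) h1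
    exact measure_mono_null h2 (hAfr j)
  set G : Set (Fin n → ℝ) := ⋃ k ∈ S, (zvec k + ·) '' B k with hGdef
  have hpiece_sub : ∀ k, (zvec k + ·) '' B k ⊆ Gt := by
    intro k
    refine (Set.image_mono ((hBsubA k).trans Set.inter_subset_left)).trans ?_
    exact Set.image_preimage_subset _ _
  have hGsub : G ⊆ Gt := Set.iUnion₂_subset (fun k _ => hpiece_sub k)
  have hGcomp : IsCompact G := S.isCompact_biUnion (fun k _ =>
    ((hBcomp k).image (continuous_const.add continuous_id)))
  have hGfr : volume (frontier G) = 0 := by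
    refine measure_mono_null (aux_frontier_biUnion S _) ?_
    rw [← Finset.set_biUnion_coe, measure_biUnion_null_iff S.countable_toSet]
    intro k _
    rw [aux_frontier_image, aux_image_vol]
    exact hBfr k
  -- packing
  have hpack : ∀ k k' : Fin n → ℤ, k ≠ k' →
      volume (((zvec k + ·) '' G) ∩ ((zvec k' + ·) '' G)) = 0 := by
    intro k k' hkk
    have himg : ∀ (a b : Fin n → ℤ) (s : Set (Fin n → ℝ)),
        (zvec a + ·) '' ((zvec b + ·) '' s) = (zvec (a + b) + ·) '' s := by
      intro a b s
      rw [Set.image_image]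
      rw [show (fun x => zvec a + (zvec b + x)) = fun x => zvec (a + b) + x from by
        funext x; rw [zvec_add, add_assoc]]
    have hexp : ∀ m : Fin n → ℤ, (zvec m + ·) '' G =
        ⋃ j ∈ S, (zvec (m + j) + ·) '' B j := by
      intro m
      rw [hGdef, Set.image_iUnion₂]
      exact Set.iUnion₂_congr fun j _ => himg m j (B j)
    rw [hexp k, hexp k']
    have hsub : (⋃ j ∈ S, (zvec (k + j) + ·) '' B j) ∩
        (⋃ j' ∈ S, (zvec (k' + j') + ·) '' B j')
        ⊆ ⋃ j ∈ S, ⋃ j' ∈ S,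
            ((zvec (k + j) + ·) '' B j) ∩ ((zvec (k' + j') + ·) '' B j') := by
      rintro x ⟨hx1, hx2⟩
      simp only [Set.mem_iUnion] at hx1 hx2 ⊢
      obtain ⟨j, hj, h1⟩ := hx1
      obtain ⟨j', hj', h2⟩ := hx2
      exact ⟨j, hj, j', hj', h1, h2⟩
    refine measure_mono_null hsub ?_
    rw [← Finset.set_biUnion_coe, measure_biUnion_null_iff S.countable_toSet]
    intro j hj
    rw [← Finset.set_biUnion_coe, measure_biUnion_null_iff S.countable_toSet]
    intro j' hj'
    rw [Finset.mem_coe] at hj hj'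
    by_cases hcase : k + j = k' + j'
    · have hjj : j ≠ j' := by
        intro h
        apply hkk
        rw [h] at hcase
        exact add_right_cancel hcase
      rw [hcase, ← Set.image_inter (add_right_injective (zvec (k' + j'))), aux_image_vol]
      have hfne : f j ≠ f j' := fun h => hjj (hf h)
      rcases hfne.lt_or_gt with h | h
      · exact hBB j hj j' h
      · rw [Set.inter_comm]
        exact hBB j' hj' j h
    · refine measure_mono_null
        (Set.inter_subset_inter
          (Set.image_mono ((hBsubA j).trans (hAsubQ j)))
          (Set.image_mono ((hBsubA j').trans (hAsubQ j')))) (hQtrans _ _ hcase)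
  -- covering
  have hcover : (⋃ l : Fin n → ℤ, (zvec l + ·) '' Gt) ⊆
      ⋃ l : Fin n → ℤ, (zvec l + ·) '' G := by
    intro x hx
    rw [Set.mem_iUnion] at hx
    obtain ⟨l, y, hy, rfl⟩ := hx
    set k₀ : Fin n → ℤ := fun i => ⌊y i⌋ with hk₀
    set z : Fin n → ℝ := y - zvec k₀ with hz
    have hzA : z ∈ A k₀ := by
      constructor
      · show zvec k₀ + z ∈ Gt
        have : zvec k₀ + z = y := by rw [hz]; abel
        rw [this]; exact hy
      · rw [hQdef, Set.mem_Icc]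
        constructor
        · intro i
          have : (0:ℝ) ≤ y i - (⌊y i⌋ : ℝ) := by linarith [Int.floor_le (y i)]
          simpa [hz, zvec, hk₀] using this
        · intro i
          have : y i - (⌊y i⌋:ℝ) ≤ 1 := by linarith [Int.lt_floor_add_one (y i)]
          simpa [hz, zvec, hk₀] using this
    set P : Set ℕ := {m | ∃ kk, f kk = m ∧ z ∈ A kk} with hP
    have hPne : P.Nonempty := ⟨f k₀, k₀, rfl, hzA⟩
    obtain ⟨kmin, hfkmin, hzmin⟩ := Nat.sInf_mem hPne
    have hzB : z ∈ B kmin := by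
      apply subset_closure
      refine ⟨hzmin, ?_⟩
      intro hzC
      rw [hCdef] at hzC
      obtain ⟨k', hk', hzk'⟩ := Set.mem_iUnion₂.mp hzC
      have hk'lt : f k' < f kmin := (Finset.mem_filter.mp hk').2
      have hmem : f k' ∈ P := ⟨k', rfl, hzk'⟩
      have := Nat.sInf_le hmem
      omega
    have hkminS : kmin ∈ S := (hmemS kmin).mpr ⟨z, hzmin⟩
    rw [Set.mem_iUnion]
    refine ⟨l + k₀ - kmin, zvec kmin + z, ?_, ?_⟩
    · exact Set.mem_iUnion₂.mpr ⟨kmin, hkminS, ⟨z, hzB, rfl⟩⟩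
    · have hzs : zvec (l + k₀ - kmin) = zvec l + zvec k₀ - zvec kmin := by
        funext i; simp [zvec]
      rw [hzs, hz]
      abel
  have hsub1 : (⋃ k : Fin n → ℤ, (zvec k + ·) '' G) ⊆
      ⋃ k : Fin n → ℤ, (zvec k + ·) '' Gt :=
    Set.iUnion_mono (fun k => Set.image_mono hGsub)
  refine ⟨G, hGsub, hGcomp, hGfr, hpack, ?_⟩
  rw [Set.diff_eq_empty.mpr hsub1, Set.diff_eq_empty.mpr hcover, Set.union_empty,
    measure_empty]
end
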